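/- arXiv:2308.02428 — 9 statements merged into one kernel-verified Lean document; each statement's English description precedes it below -/
import Mathlib

section
/- Let ν > 0 be real and let f : (0,∞) → ℝ be continuously differentiable. Assume that for every natural number j the functions x ↦ e^{−x} x^{ν−1} x^j f(x) and x ↦ e^{−x} x^{ν} x^j f'(x) are integrable on (0,∞), and that for every natural number j, e^{−x} x^{ν} x^j f(x) → 0 as x → 0⁺ and as x → ∞. Then for every n ∈ ℕ, the n-th Laguerre coefficient of order ν of the derivative f' satisfies c_n^ν(f') = Σ_{k=0}^{n} c_k^ν(f) − ν · Σ_{k=0}^{n} c_k^{ν−1}(f). -/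
open Real MeasureTheory Filter Set Finset

/-- Generalized Laguerre polynomial of order `ν` and degree `n`. -/
noncomputable def lagP (ν : ℝ) (n : ℕ) (x : ℝ) : ℝ :=
  ∑ m ∈ Finset.range (n + 1),
    Real.Gamma ((n : ℝ) + ν + 1) /
      (Real.Gamma ((m : ℝ) + ν + 1) * ((n - m).factorial : ℝ) * (m.factorial : ℝ)) *
      (-x) ^ m

lemma lagP_zero (ν : ℝ) (hν : -1 < ν) (x : ℝ) : lagP ν 0 x = 1 := by
  have h : Real.Gamma (ν + 1) ≠ 0 := (Real.Gamma_pos_of_pos (by linarith)).ne'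
  simp [lagP, div_self, h]

lemma coeff_id (ν : ℝ) (hν : -1 < ν) (n m : ℕ) (hm : m ≤ n) :
    Real.Gamma (((n : ℝ) + 1) + (ν + 1) + 1) /
        (Real.Gamma ((m : ℝ) + (ν + 1) + 1) * ((n + 1 - m).factorial : ℝ) * (m.factorial : ℝ))
      = Real.Gamma (((n : ℝ) + 1) + ν + 1) /
          (Real.Gamma ((m : ℝ) + ν + 1) * ((n + 1 - m).factorial : ℝ) * (m.factorial : ℝ))
        + Real.Gamma ((n : ℝ) + (ν + 1) + 1) /
            (Real.Gamma ((m : ℝ) + (ν + 1) + 1) * ((n - m).factorial : ℝ) * (m.factorial : ℝ)) := by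
  have hm0 : (0:ℝ) ≤ m := Nat.cast_nonneg m
  have hn0 : (0:ℝ) ≤ n := Nat.cast_nonneg n
  have hmn : (n + 1 - m) = (n - m) + 1 := by omega
  rw [hmn, Nat.factorial_succ]
  have hg1 : Real.Gamma (((n : ℝ) + 1) + (ν + 1) + 1)
      = (((n : ℝ) + 1) + ν + 1) * Real.Gamma (((n : ℝ) + 1) + ν + 1) := by
    rw [show ((n : ℝ) + 1) + (ν + 1) + 1 = (((n : ℝ) + 1) + ν + 1) + 1 by ring,
      Real.Gamma_add_one (by nlinarith)]
  have hg2 : Real.Gamma ((m : ℝ) + (ν + 1) + 1)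
      = ((m : ℝ) + ν + 1) * Real.Gamma ((m : ℝ) + ν + 1) := by
    rw [show (m : ℝ) + (ν + 1) + 1 = ((m : ℝ) + ν + 1) + 1 by ring,
      Real.Gamma_add_one (by nlinarith)]
  have hg3 : Real.Gamma ((n : ℝ) + (ν + 1) + 1) = Real.Gamma (((n : ℝ) + 1) + ν + 1) := by
    ring_nf
  rw [hg1, hg2, hg3]
  have hΓm : Real.Gamma ((m : ℝ) + ν + 1) ≠ 0 :=
    (Real.Gamma_pos_of_pos (by nlinarith)).ne'
  have hfac1 : ((n - m).factorial : ℝ) ≠ 0 := Nat.cast_ne_zero.mpr (Nat.factorial_ne_zero _)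
  have hfacm : ((m).factorial : ℝ) ≠ 0 := Nat.cast_ne_zero.mpr (Nat.factorial_ne_zero _)
  have hmν : (m : ℝ) + ν + 1 ≠ 0 := by nlinarith
  have hle : (m : ℝ) ≤ (n : ℝ) := Nat.cast_le.mpr hm
  have h1 : (n : ℝ) - (m : ℝ) + 1 ≠ 0 := by linarith
  push_cast [Nat.cast_sub hm]
  field_simp
  ring

lemma lagP_succ_add (ν : ℝ) (hν : -1 < ν) (n : ℕ) (x : ℝ) :
    lagP (ν + 1) (n + 1) x = lagP ν (n + 1) x + lagP (ν + 1) n x := by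
  unfold lagP
  rw [Finset.sum_range_succ, Finset.sum_range_succ (n := n + 1)]
  have hsum : ∀ m ∈ Finset.range (n + 1),
      Real.Gamma (((n+1 : ℕ) : ℝ) + (ν + 1) + 1) /
          (Real.Gamma ((m : ℝ) + (ν + 1) + 1) * (((n+1) - m).factorial : ℝ) * (m.factorial : ℝ)) *
          (-x) ^ m
        = Real.Gamma (((n+1 : ℕ) : ℝ) + ν + 1) /
            (Real.Gamma ((m : ℝ) + ν + 1) * (((n+1) - m).factorial : ℝ) * (m.factorial : ℝ)) *
            (-x) ^ m
          + Real.Gamma ((n : ℝ) + (ν + 1) + 1) /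
              (Real.Gamma ((m : ℝ) + (ν + 1) + 1) * ((n - m).factorial : ℝ) * (m.factorial : ℝ)) *
              (-x) ^ m := by
    intro m hm
    have hm' : m ≤ n := Nat.lt_succ_iff.mp (Finset.mem_range.mp hm)
    have := coeff_id ν hν n m hm'
    push_cast
    push_cast at this
    rw [this]; ring
  rw [Finset.sum_congr rfl hsum, Finset.sum_add_distrib]
  have htop : Real.Gamma (((n+1 : ℕ) : ℝ) + (ν + 1) + 1) /
          (Real.Gamma (((n+1 : ℕ) : ℝ) + (ν + 1) + 1) * (((n+1) - (n+1)).factorial : ℝ)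
            * ((n+1).factorial : ℝ)) * (-x) ^ (n+1)
      = Real.Gamma (((n+1 : ℕ) : ℝ) + ν + 1) /
          (Real.Gamma (((n+1 : ℕ) : ℝ) + ν + 1) * (((n+1) - (n+1)).factorial : ℝ)
            * ((n+1).factorial : ℝ)) * (-x) ^ (n+1) := by
    have h1 : Real.Gamma (((n+1 : ℕ) : ℝ) + (ν + 1) + 1) ≠ 0 := by
      refine (Real.Gamma_pos_of_pos ?_).ne'
      have : (0:ℝ) ≤ ((n+1 : ℕ) : ℝ) := Nat.cast_nonneg _
      linarith
    have h2 : Real.Gamma (((n+1 : ℕ) : ℝ) + ν + 1) ≠ 0 := by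
      refine (Real.Gamma_pos_of_pos ?_).ne'
      have : (0:ℝ) ≤ ((n+1 : ℕ) : ℝ) := Nat.cast_nonneg _
      linarith
    have hf : (((n+1) - (n+1)).factorial : ℝ) ≠ 0 := Nat.cast_ne_zero.mpr (Nat.factorial_ne_zero _)
    have hf2 : (((n+1)).factorial : ℝ) ≠ 0 := Nat.cast_ne_zero.mpr (Nat.factorial_ne_zero _)
    field_simp
  rw [htop]
  ring

lemma sum_lagP (ν : ℝ) (hν : -1 < ν) (n : ℕ) (x : ℝ) :
    ∑ k ∈ Finset.range (n + 1), lagP ν k x = lagP (ν + 1) n x := by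
  induction n with
  | zero => simp [lagP_zero ν hν, lagP_zero (ν + 1) (by linarith)]
  | succ n ih =>
      rw [Finset.sum_range_succ, ih, lagP_succ_add ν hν n x]
      ring

lemma hasDerivAt_lagP_succ (ν : ℝ) (hν : -1 < ν) (n : ℕ) (x : ℝ) :
    HasDerivAt (lagP ν (n + 1)) (-(lagP (ν + 1) n x)) x := by
  have hterm : ∀ m : ℕ, HasDerivAt (fun y : ℝ =>
      Real.Gamma (((n+1 : ℕ) : ℝ) + ν + 1) /
        (Real.Gamma ((m : ℝ) + ν + 1) * (((n+1) - m).factorial : ℝ) * (m.factorial : ℝ)) *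
        (-y) ^ m)
      (Real.Gamma (((n+1 : ℕ) : ℝ) + ν + 1) /
        (Real.Gamma ((m : ℝ) + ν + 1) * (((n+1) - m).factorial : ℝ) * (m.factorial : ℝ)) *
        ((m : ℝ) * (-x) ^ (m - 1) * (-1))) x := by
    intro m
    exact (((hasDerivAt_pow m (-x)).comp x (hasDerivAt_neg x)).const_mul _).congr_deriv
      (by ring)
  have hsum : HasDerivAt (lagP ν (n + 1))
      (∑ m ∈ Finset.range (n + 2),
        Real.Gamma (((n+1 : ℕ) : ℝ) + ν + 1) /
          (Real.Gamma ((m : ℝ) + ν + 1) * (((n+1) - m).factorial : ℝ) * (m.factorial : ℝ)) *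
          ((m : ℝ) * (-x) ^ (m - 1) * (-1))) x := by
    have := HasDerivAt.fun_sum (u := Finset.range (n + 2)) (fun m _ => hterm m)
    exact this.congr_deriv rfl
  refine hsum.congr_deriv ?_
  rw [Finset.sum_range_succ']
  have h0 : Real.Gamma (((n+1 : ℕ) : ℝ) + ν + 1) /
      (Real.Gamma (((0:ℕ) : ℝ) + ν + 1) * (((n+1) - 0).factorial : ℝ) * ((0:ℕ).factorial : ℝ)) *
      (((0:ℕ) : ℝ) * (-x) ^ (0 - 1) * (-1)) = 0 := by simp
  rw [h0, add_zero, lagP, ← Finset.sum_neg_distrib]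
  refine Finset.sum_congr rfl fun k hk => ?_
  rw [Nat.succ_sub_succ, Nat.factorial_succ, Nat.add_sub_cancel]
  have hg : Real.Gamma (((k+1 : ℕ) : ℝ) + ν + 1) = Real.Gamma ((k : ℝ) + (ν + 1) + 1) := by
    push_cast; ring_nf
  have hg2 : Real.Gamma (((n+1 : ℕ) : ℝ) + ν + 1) = Real.Gamma ((n : ℝ) + (ν + 1) + 1) := by
    push_cast; ring_nf
  rw [hg, hg2]
  have hΓk : Real.Gamma ((k : ℝ) + (ν + 1) + 1) ≠ 0 := by
    refine (Real.Gamma_pos_of_pos ?_).ne'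
    have : (0:ℝ) ≤ (k : ℝ) := Nat.cast_nonneg _
    linarith
  have hf1 : ((n - k).factorial : ℝ) ≠ 0 := Nat.cast_ne_zero.mpr (Nat.factorial_ne_zero _)
  have hf2 : ((k).factorial : ℝ) ≠ 0 := Nat.cast_ne_zero.mpr (Nat.factorial_ne_zero _)
  have hk1 : ((k : ℝ) + 1) ≠ 0 := by
    have : (0:ℝ) ≤ (k : ℝ) := Nat.cast_nonneg _
    linarith
  push_cast
  field_simp

lemma hasDerivAt_lagP (ν : ℝ) (hν : -1 < ν) (n : ℕ) (x : ℝ) :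
    HasDerivAt (lagP ν n) (lagP ν n x - lagP (ν + 1) n x) x := by
  cases n with
  | zero =>
      have h : lagP ν 0 = fun _ : ℝ => (1:ℝ) := funext (lagP_zero ν hν)
      rw [h, lagP_zero (ν + 1) (by linarith) x]
      simpa using hasDerivAt_const x (1:ℝ)
  | succ n =>
      refine (hasDerivAt_lagP_succ ν hν n x).congr_deriv ?_
      rw [lagP_succ_add ν hν n x]; ring

lemma lagP_expand (μ ρ : ℝ) (n : ℕ) (g : ℝ → ℝ) (x : ℝ) :
    Real.exp (-x) * x ^ μ * lagP ρ n x * g x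
      = ∑ m ∈ Finset.range (n + 1),
          (Real.Gamma ((n : ℝ) + ρ + 1) /
              (Real.Gamma ((m : ℝ) + ρ + 1) * ((n - m).factorial : ℝ) * (m.factorial : ℝ))
            * (-1 : ℝ) ^ m)
          * (Real.exp (-x) * x ^ μ * x ^ m * g x) := by
  simp only [lagP, Finset.mul_sum, Finset.sum_mul]
  refine Finset.sum_congr rfl fun m _ => ?_
  rw [neg_pow]
  ring

lemma integrableOn_weight (μ ρ : ℝ) (n : ℕ) (g : ℝ → ℝ)
    (h : ∀ j : ℕ, IntegrableOn (fun x : ℝ => Real.exp (-x) * x ^ μ * x ^ j * g x) (Set.Ioi 0)) :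
    IntegrableOn (fun x : ℝ => Real.exp (-x) * x ^ μ * lagP ρ n x * g x) (Set.Ioi 0) := by
  have he : (fun x : ℝ => Real.exp (-x) * x ^ μ * lagP ρ n x * g x)
      = fun x : ℝ => ∑ m ∈ Finset.range (n + 1),
          (Real.Gamma ((n : ℝ) + ρ + 1) /
              (Real.Gamma ((m : ℝ) + ρ + 1) * ((n - m).factorial : ℝ) * (m.factorial : ℝ))
            * (-1 : ℝ) ^ m)
          * (Real.exp (-x) * x ^ μ * x ^ m * g x) := funext (lagP_expand μ ρ n g)
  rw [he]
  exact MeasureTheory.integrable_finset_sum _ fun m _ => (h m).const_mul _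

lemma tendsto_weight (μ ρ : ℝ) (n : ℕ) (g : ℝ → ℝ) (l : Filter ℝ)
    (h : ∀ j : ℕ, Tendsto (fun x : ℝ => Real.exp (-x) * x ^ μ * x ^ j * g x) l (nhds 0)) :
    Tendsto (fun x : ℝ => Real.exp (-x) * x ^ μ * lagP ρ n x * g x) l (nhds 0) := by
  have he : (fun x : ℝ => Real.exp (-x) * x ^ μ * lagP ρ n x * g x)
      = fun x : ℝ => ∑ m ∈ Finset.range (n + 1),
          (Real.Gamma ((n : ℝ) + ρ + 1) /
              (Real.Gamma ((m : ℝ) + ρ + 1) * ((n - m).factorial : ℝ) * (m.factorial : ℝ))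
            * (-1 : ℝ) ^ m)
          * (Real.exp (-x) * x ^ μ * x ^ m * g x) := funext (lagP_expand μ ρ n g)
  rw [he]
  have := tendsto_finset_sum (Finset.range (n + 1))
    (fun m (_ : m ∈ Finset.range (n + 1)) => ((h m).const_mul
      (Real.Gamma ((n : ℝ) + ρ + 1) /
          (Real.Gamma ((m : ℝ) + ρ + 1) * ((n - m).factorial : ℝ) * (m.factorial : ℝ))
        * (-1 : ℝ) ^ m)))
  simpa using this

lemma integral_deriv_eq_zero (G D : ℝ → ℝ)
    (hderiv : ∀ x ∈ Set.Ioi (0:ℝ), HasDerivAt G (D x) x)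
    (hint : IntegrableOn D (Set.Ioi 0))
    (h0 : Tendsto G (nhdsWithin 0 (Set.Ioi 0)) (nhds 0))
    (htop : Tendsto G atTop (nhds 0)) :
    ∫ x in Set.Ioi (0:ℝ), D x = 0 := by
  set I : ℝ := ∫ x in Set.Ioi (0:ℝ), D x with hI
  have key : ∀ ε ∈ Set.Ioi (0:ℝ), ∫ x in Set.Ioc 0 ε, D x = G ε + I := by
    intro ε hε
    have h1 : ∫ x in Set.Ioi ε, D x = 0 - G ε :=
      MeasureTheory.integral_Ioi_of_hasDerivAt_of_tendsto
        ((hderiv ε hε).continuousAt.continuousWithinAt)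
        (fun x hx => hderiv x (Set.mem_Ioi.mpr (lt_trans (Set.mem_Ioi.mp hε) (Set.mem_Ioi.mp hx))))
        (hint.mono_set (Set.Ioi_subset_Ioi (le_of_lt hε)))
        htop
    have h2 : Set.Ioc 0 ε ∪ Set.Ioi ε = Set.Ioi (0:ℝ) := Set.Ioc_union_Ioi_eq_Ioi (le_of_lt hε)
    have h3 : I = (∫ x in Set.Ioc 0 ε, D x) + ∫ x in Set.Ioi ε, D x := by
      rw [hI, ← h2, MeasureTheory.setIntegral_union (Set.Ioc_disjoint_Ioi le_rfl)
        measurableSet_Ioi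
        (hint.mono_set (by rw [← h2]; exact Set.subset_union_left))
        (hint.mono_set (by rw [← h2]; exact Set.subset_union_right))]
    rw [h3, h1]; ring
  have hμ : Tendsto (fun ε : ℝ => (volume.restrict (Set.Ioi (0:ℝ))) (Set.Ioc 0 ε))
      (nhdsWithin 0 (Set.Ioi 0)) (nhds 0) := by
    have heq : ∀ ε : ℝ, (volume.restrict (Set.Ioi (0:ℝ))) (Set.Ioc 0 ε) = ENNReal.ofReal ε := by
      intro ε
      rw [Measure.restrict_apply measurableSet_Ioc,
        Set.inter_eq_left.mpr Set.Ioc_subset_Ioi_self, Real.volume_Ioc, sub_zero]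
    simp only [heq]
    have : Tendsto (fun ε : ℝ => ε) (nhdsWithin 0 (Set.Ioi 0)) (nhds 0) :=
      tendsto_id.mono_left nhdsWithin_le_nhds
    simpa using ENNReal.tendsto_ofReal this
  have hA : Tendsto (fun ε : ℝ => ∫ x in Set.Ioc 0 ε, D x ∂(volume.restrict (Set.Ioi 0)))
      (nhdsWithin 0 (Set.Ioi 0)) (nhds 0) :=
    hint.tendsto_setIntegral_nhds_zero hμ
  have hA' : Tendsto (fun ε : ℝ => ∫ x in Set.Ioc 0 ε, D x)
      (nhdsWithin 0 (Set.Ioi 0)) (nhds 0) := by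
    refine hA.congr' ?_
    filter_upwards [self_mem_nhdsWithin] with ε (hε : ε ∈ Set.Ioi (0:ℝ))
    rw [Measure.restrict_restrict measurableSet_Ioc,
      Set.inter_eq_left.mpr Set.Ioc_subset_Ioi_self]
  have hB : Tendsto (fun ε : ℝ => G ε + I) (nhdsWithin 0 (Set.Ioi 0)) (nhds (0 + I)) :=
    h0.add_const I
  have hB' : Tendsto (fun ε : ℝ => ∫ x in Set.Ioc 0 ε, D x)
      (nhdsWithin 0 (Set.Ioi 0)) (nhds (0 + I)) := by
    refine hB.congr' ?_
    filter_upwards [self_mem_nhdsWithin] with ε hε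
    exact (key ε hε).symm
  have := tendsto_nhds_unique hA' hB'
  linarith [this]

/-- `n`-th Laguerre coefficient of order `ν` of a function `f`. -/
noncomputable def lagC (ν : ℝ) (n : ℕ) (f : ℝ → ℝ) : ℝ :=
  ∫ x in Set.Ioi (0 : ℝ), Real.exp (-x) * x ^ ν * lagP ν n x * f x

theorem laguerre_transform_of_deriv
    (ν : ℝ) (hν : 0 < ν) (f f' : ℝ → ℝ)
    (hderiv : ∀ x ∈ Set.Ioi (0 : ℝ), HasDerivAt f (f' x) x)
    (hcont : ContinuousOn f' (Set.Ioi 0))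
    (hint_f : ∀ j : ℕ,
      IntegrableOn (fun x : ℝ => Real.exp (-x) * x ^ (ν - 1) * x ^ j * f x) (Set.Ioi 0))
    (hint_f' : ∀ j : ℕ,
      IntegrableOn (fun x : ℝ => Real.exp (-x) * x ^ ν * x ^ j * f' x) (Set.Ioi 0))
    (hlim_zero : ∀ j : ℕ,
      Tendsto (fun x : ℝ => Real.exp (-x) * x ^ ν * x ^ j * f x)
        (nhdsWithin 0 (Set.Ioi 0)) (nhds 0))
    (hlim_top : ∀ j : ℕ,
      Tendsto (fun x : ℝ => Real.exp (-x) * x ^ ν * x ^ j * f x) atTop (nhds 0)) :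
    ∀ n : ℕ, lagC ν n f' =
      (∑ k ∈ Finset.range (n + 1), lagC ν k f) -
        ν * ∑ k ∈ Finset.range (n + 1), lagC (ν - 1) k f := by
  intro n
  have hν1 : (-1:ℝ) < ν := by linarith
  have hν2 : (-1:ℝ) < ν - 1 := by linarith
  have hint_f0 : ∀ j : ℕ,
      IntegrableOn (fun x : ℝ => Real.exp (-x) * x ^ ν * x ^ j * f x) (Set.Ioi 0) := by
    intro j
    refine (hint_f (j + 1)).congr_fun ?_ measurableSet_Ioi
    intro x hx
    have hx0 : (0:ℝ) < x := hx
    show Real.exp (-x) * x ^ (ν - 1) * x ^ (j + 1) * f x = Real.exp (-x) * x ^ ν * x ^ j * f x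
    rw [Real.rpow_sub_one hx0.ne', pow_succ]
    field_simp
  set A : ℝ → ℝ := fun x => Real.exp (-x) * x ^ ν * lagP ν n x * f' x with hAdef
  set B : ℝ → ℝ := fun x => Real.exp (-x) * x ^ (ν - 1) * lagP ν n x * f x with hBdef
  set C : ℝ → ℝ := fun x => Real.exp (-x) * x ^ ν * lagP (ν + 1) n x * f x with hCdef
  have hA : IntegrableOn A (Set.Ioi 0) := integrableOn_weight ν ν n f' hint_f'
  have hB : IntegrableOn B (Set.Ioi 0) := integrableOn_weight (ν - 1) ν n f hint_f
  have hC : IntegrableOn C (Set.Ioi 0) := integrableOn_weight ν (ν + 1) n f hint_f0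
  set D : ℝ → ℝ := fun x => A x + ν * B x - C x with hDdef
  have hD : IntegrableOn D (Set.Ioi 0) := (hA.add (hB.const_mul ν)).sub hC
  set G : ℝ → ℝ := fun x => Real.exp (-x) * x ^ ν * lagP ν n x * f x with hGdef
  have hGd : ∀ x ∈ Set.Ioi (0:ℝ), HasDerivAt G (D x) x := by
    intro x hx
    have hx0 : (0:ℝ) < x := hx
    have he : HasDerivAt (fun y : ℝ => Real.exp (-y)) (Real.exp (-x) * (-1)) x :=
      (hasDerivAt_neg x).exp
    have hp : HasDerivAt (fun y : ℝ => y ^ ν) (ν * x ^ (ν - 1)) x :=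
      Real.hasDerivAt_rpow_const (Or.inl hx0.ne')
    have hL := hasDerivAt_lagP ν hν1 n x
    have hf := hderiv x hx
    exact (((he.mul hp).mul hL).mul hf).congr_deriv (by simp only [hDdef, hAdef, hBdef, hCdef, Pi.mul_apply]; ring)
  have hG0 : Tendsto G (nhdsWithin 0 (Set.Ioi 0)) (nhds 0) :=
    tendsto_weight ν ν n f _ hlim_zero
  have hGtop : Tendsto G atTop (nhds 0) :=
    tendsto_weight ν ν n f atTop hlim_top
  have hzero : ∫ x in Set.Ioi (0:ℝ), D x = 0 :=
    integral_deriv_eq_zero G D hGd hD hG0 hGtop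
  have hsplit : ∫ x in Set.Ioi (0:ℝ), D x
      = (∫ x in Set.Ioi (0:ℝ), A x) + ν * (∫ x in Set.Ioi (0:ℝ), B x)
        - ∫ x in Set.Ioi (0:ℝ), C x := by
    rw [show (∫ x in Set.Ioi (0:ℝ), D x)
        = ∫ x in Set.Ioi (0:ℝ), (A x + ν * B x) - C x from rfl]
    have h1 : Integrable (fun x => A x + ν * B x) (volume.restrict (Set.Ioi 0)) :=
      hA.add (hB.const_mul ν)
    have h2 : Integrable (fun x => ν * B x) (volume.restrict (Set.Ioi 0)) := hB.const_mul ν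
    have e1 := MeasureTheory.integral_sub (f := fun x => A x + ν * B x) (g := C) h1 hC
    have e2 := MeasureTheory.integral_add (f := A) (g := fun x => ν * B x) hA h2
    have e3 := MeasureTheory.integral_const_mul (μ := volume.restrict (Set.Ioi 0)) ν B
    rw [e1, e2, e3]
  have hACint : ∫ x in Set.Ioi (0:ℝ), A x = lagC ν n f' := rfl
  have hCint : ∫ x in Set.Ioi (0:ℝ), C x = ∑ k ∈ Finset.range (n + 1), lagC ν k f := by
    have heq : ∀ x : ℝ, C x = ∑ k ∈ Finset.range (n + 1),
        Real.exp (-x) * x ^ ν * lagP ν k x * f x := by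
      intro x
      rw [hCdef]
      simp only [← sum_lagP ν hν1 n x, Finset.mul_sum, Finset.sum_mul]
    rw [funext heq, MeasureTheory.integral_finset_sum _
      (fun k _ => integrableOn_weight ν ν k f hint_f0)]
    rfl
  have hBint : ∫ x in Set.Ioi (0:ℝ), B x = ∑ k ∈ Finset.range (n + 1), lagC (ν - 1) k f := by
    have hsum' : ∀ x : ℝ, lagP ν n x = ∑ k ∈ Finset.range (n + 1), lagP (ν - 1) k x := by
      intro x
      rw [sum_lagP (ν - 1) hν2 n x, sub_add_cancel]
    have heq : ∀ x : ℝ, B x = ∑ k ∈ Finset.range (n + 1),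
        Real.exp (-x) * x ^ (ν - 1) * lagP (ν - 1) k x * f x := by
      intro x
      rw [hBdef]
      simp only [hsum' x, Finset.mul_sum, Finset.sum_mul]
    rw [funext heq, MeasureTheory.integral_finset_sum _
      (fun k _ => integrableOn_weight (ν - 1) (ν - 1) k f hint_f)]
    rfl
  rw [hsplit, hACint, hBint, hCint] at hzero
  linarith
end

section
/- Let ν > −1 be real and let f : (0,∞) → ℝ be continuously differentiable. Assume that for every natural number j the functions x ↦ e^{−x} x^{ν} x^j f(x) and x ↦ e^{−x} x^{ν+1} x^j f'(x) are integrable on (0,∞), and that for every natural number j, e^{−x} x^{ν+1} x^j f(x) → 0 as x → 0⁺ and as x → ∞. Then for every n ∈ ℕ, the n-th Laguerre coefficient of order ν of the function x ↦ x·f'(x) satisfies c_n^ν(x f'(x)) = n c_n^ν(f) − (n+1) c_{n+1}^ν(f). -/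
open Real MeasureTheory Filter Set Finset

noncomputable def lagA (ν : ℝ) (n m : ℕ) : ℝ :=
  Real.Gamma ((n : ℝ) + ν + 1) /
    (Real.Gamma ((m : ℝ) + ν + 1) * ((n - m).factorial : ℝ) * (m.factorial : ℝ))

noncomputable def lagD (ν : ℝ) (n : ℕ) (x : ℝ) : ℝ :=
  ∑ m ∈ Finset.range (n + 1), lagA ν n m * ((m : ℝ) * (-x) ^ (m - 1) * (-1))

lemma lagP_eq (ν : ℝ) (n : ℕ) (x : ℝ) :
    lagP ν n x = ∑ m ∈ Finset.range (n + 1), lagA ν n m * (-x) ^ m := rfl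

lemma lagA_key (ν : ℝ) (hν : -1 < ν) (n : ℕ) : ∀ m ∈ Finset.range (n + 2),
    (if m ≤ n then ((n : ℝ) + ν + 1 + m) * lagA ν n m else 0)
      + (if 1 ≤ m then lagA ν n (m - 1) else 0)
    = ((n : ℝ) + 1) * lagA ν (n + 1) m := by
  have hGpos : ∀ y : ℝ, 0 < y → (0:ℝ) < Real.Gamma y := fun y hy => Real.Gamma_pos_of_pos hy
  have hn0 : (0:ℝ) ≤ (n:ℝ) := Nat.cast_nonneg n
  have hGn1 : Real.Gamma ((↑(n+1):ℝ) + ν + 1)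
      = ((n:ℝ) + ν + 1) * Real.Gamma ((n:ℝ) + ν + 1) := by
    have e : (↑(n+1):ℝ) + ν + 1 = ((n:ℝ) + ν + 1) + 1 := by push_cast; ring
    rw [e, Real.Gamma_add_one (ne_of_gt (by linarith))]
  have hGnpos : (0:ℝ) < Real.Gamma ((n:ℝ) + ν + 1) := hGpos _ (by linarith)
  intro m hm
  have hm' : m ≤ n + 1 := by
    have := Finset.mem_range.mp hm; omega
  rcases Nat.eq_zero_or_pos m with rfl | hm1
  · -- m = 0
    rw [if_pos (Nat.zero_le n), if_neg (by norm_num : ¬ 1 ≤ 0), add_zero]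
    have hG0 : (0:ℝ) < Real.Gamma ((↑(0:ℕ):ℝ) + ν + 1) := hGpos _ (by
      simp only [Nat.cast_zero]; linarith)
    have hb : (Real.Gamma ((↑(0:ℕ):ℝ) + ν + 1) * ((n - 0).factorial : ℝ)
        * ((0:ℕ).factorial : ℝ)) ≠ 0 := by
      exact ne_of_gt (mul_pos (mul_pos hG0 (Nat.cast_pos.mpr (Nat.factorial_pos _))) (Nat.cast_pos.mpr (Nat.factorial_pos _)))
    have hd : (Real.Gamma ((↑(0:ℕ):ℝ) + ν + 1) * ((n + 1 - 0).factorial : ℝ)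
        * ((0:ℕ).factorial : ℝ)) ≠ 0 := by
      exact ne_of_gt (mul_pos (mul_pos hG0 (Nat.cast_pos.mpr (Nat.factorial_pos _))) (Nat.cast_pos.mpr (Nat.factorial_pos _)))
    unfold lagA
    rw [← mul_div_assoc, ← mul_div_assoc, div_eq_div_iff hb hd, hGn1]
    simp only [Nat.sub_zero, Nat.factorial_succ]
    push_cast
    ring
  · have h1m : 1 ≤ m := hm1
    rcases eq_or_lt_of_le hm' with rfl | hmn
    · -- m = n + 1
      rw [if_neg (by omega : ¬ n + 1 ≤ n), if_pos h1m, zero_add, Nat.add_sub_cancel]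
      have hGnn : (0:ℝ) < Real.Gamma ((↑(n+1):ℝ) + ν + 1) := by rw [hGn1]; exact mul_pos (by linarith) hGnpos
      have hb : (Real.Gamma ((↑n:ℝ) + ν + 1) * ((n - n).factorial : ℝ)
          * (n.factorial : ℝ)) ≠ 0 := by
        exact ne_of_gt (mul_pos (mul_pos hGnpos (Nat.cast_pos.mpr (Nat.factorial_pos _))) (Nat.cast_pos.mpr (Nat.factorial_pos _)))
      have hd : (Real.Gamma ((↑(n+1):ℝ) + ν + 1) * ((n + 1 - (n+1)).factorial : ℝ)
          * ((n+1).factorial : ℝ)) ≠ 0 := by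
        exact ne_of_gt (mul_pos (mul_pos hGnn (Nat.cast_pos.mpr (Nat.factorial_pos _))) (Nat.cast_pos.mpr (Nat.factorial_pos _)))
      unfold lagA
      rw [← mul_div_assoc, div_eq_div_iff hb hd, hGn1]
      simp only [Nat.sub_self, Nat.factorial_succ, Nat.factorial_zero]
      push_cast
      ring
    · -- 1 ≤ m ≤ n
      have hmn' : m ≤ n := by omega
      have hm1' : (1:ℝ) ≤ (m:ℝ) := by exact_mod_cast hm1
      have hGm : Real.Gamma ((m:ℝ) + ν + 1) = ((m:ℝ) + ν) * Real.Gamma ((m:ℝ) + ν) := by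
        have e : (m:ℝ) + ν + 1 = ((m:ℝ) + ν) + 1 := by ring
        rw [e, Real.Gamma_add_one (ne_of_gt (by linarith))]
      have hGm1 : ((m - 1 : ℕ) : ℝ) + ν + 1 = (m:ℝ) + ν := by
        have : ((m - 1 : ℕ) : ℝ) = (m:ℝ) - 1 := by
          push_cast [Nat.cast_sub hm1]; ring
        rw [this]; ring
      have hsub1 : n - (m - 1) = (n - m) + 1 := by omega
      have hsub2 : n + 1 - m = (n - m) + 1 := by omega
      have hmfac : m.factorial = m * (m - 1).factorial := by
        conv_lhs => rw [show m = (m - 1) + 1 by omega]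
        rw [Nat.factorial_succ]; congr 1; omega
      have hGmνpos : (0:ℝ) < Real.Gamma ((m:ℝ) + ν) := hGpos _ (by linarith)
      have hGmpos : (0:ℝ) < Real.Gamma ((m:ℝ) + ν + 1) := by rw [hGm]; exact mul_pos (by linarith) hGmνpos
      have hGm1pos : (0:ℝ) < Real.Gamma (((m-1:ℕ):ℝ) + ν + 1) := by
        rw [hGm1]; exact hGmνpos
      rw [if_pos hmn', if_pos h1m]
      have hb1 : (Real.Gamma ((↑m:ℝ) + ν + 1) * ((n - m).factorial : ℝ)
          * (m.factorial : ℝ)) ≠ 0 := by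
        exact ne_of_gt (mul_pos (mul_pos hGmpos (Nat.cast_pos.mpr (Nat.factorial_pos _))) (Nat.cast_pos.mpr (Nat.factorial_pos _)))
      have hb2 : (Real.Gamma ((↑(m-1):ℝ) + ν + 1) * ((n - (m-1)).factorial : ℝ)
          * ((m-1).factorial : ℝ)) ≠ 0 := by
        exact ne_of_gt (mul_pos (mul_pos hGm1pos (Nat.cast_pos.mpr (Nat.factorial_pos _))) (Nat.cast_pos.mpr (Nat.factorial_pos _)))
      have hb3 : (Real.Gamma ((↑m:ℝ) + ν + 1) * ((n + 1 - m).factorial : ℝ)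
          * (m.factorial : ℝ)) ≠ 0 := by
        exact ne_of_gt (mul_pos (mul_pos hGmpos (Nat.cast_pos.mpr (Nat.factorial_pos _))) (Nat.cast_pos.mpr (Nat.factorial_pos _)))
      unfold lagA
      rw [← mul_div_assoc, div_add_div _ _ (by exact hb1) (by exact hb2), ← mul_div_assoc,
        div_eq_div_iff (mul_ne_zero hb1 hb2) hb3, hGn1, hGm1, hGm]
      rw [hsub1, hsub2, Nat.factorial_succ (n - m), hmfac]
      push_cast [Nat.cast_sub hmn']
      ring

lemma lagP_key (ν : ℝ) (hν : -1 < ν) (n : ℕ) (x : ℝ) :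
    ((n:ℝ) + ν + 1 - x) * lagP ν n x + x * lagD ν n x
      = ((n:ℝ) + 1) * lagP ν (n + 1) x := by
  have h1 : ((n:ℝ) + ν + 1) * lagP ν n x + x * lagD ν n x
      = ∑ m ∈ Finset.range (n + 2),
          (if m ≤ n then ((n:ℝ) + ν + 1 + (m:ℝ)) * lagA ν n m else 0) * (-x) ^ m := by
    rw [Finset.sum_range_succ, if_neg (by omega), zero_mul, add_zero, lagP_eq, lagD,
      Finset.mul_sum, Finset.mul_sum, ← Finset.sum_add_distrib]
    refine Finset.sum_congr rfl fun m hm => ?_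
    rw [if_pos (Nat.lt_succ_iff.mp (Finset.mem_range.mp hm))]
    cases m with
    | zero => simp
    | succ k =>
      simp only [Nat.add_sub_cancel, pow_succ]
      push_cast
      ring
  have h2 : (-x) * lagP ν n x
      = ∑ m ∈ Finset.range (n + 2), (if 1 ≤ m then lagA ν n (m - 1) else 0) * (-x) ^ m := by
    rw [Finset.sum_range_succ'
      (fun m => (if 1 ≤ m then lagA ν n (m - 1) else 0) * (-x) ^ m) (n + 1)]
    rw [if_neg (by omega), zero_mul, add_zero, lagP_eq, Finset.mul_sum]
    refine Finset.sum_congr rfl fun m hm => ?_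
    rw [if_pos (by omega), Nat.add_sub_cancel, pow_succ]
    ring
  have h3 : ∑ m ∈ Finset.range (n + 2),
      ((if m ≤ n then ((n:ℝ) + ν + 1 + (m:ℝ)) * lagA ν n m else 0)
        + (if 1 ≤ m then lagA ν n (m - 1) else 0)) * (-x) ^ m
      = ((n:ℝ) + 1) * lagP ν (n + 1) x := by
    rw [lagP_eq, Finset.mul_sum]
    refine Finset.sum_congr rfl fun m hm => ?_
    rw [lagA_key ν hν n m hm]
    ring
  calc ((n:ℝ) + ν + 1 - x) * lagP ν n x + x * lagD ν n x
      = (((n:ℝ) + ν + 1) * lagP ν n x + x * lagD ν n x) + (-x) * lagP ν n x := by ring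
    _ = ∑ m ∈ Finset.range (n + 2),
          ((if m ≤ n then ((n:ℝ) + ν + 1 + (m:ℝ)) * lagA ν n m else 0)
            + (if 1 ≤ m then lagA ν n (m - 1) else 0)) * (-x) ^ m := by
        rw [h1, h2, ← Finset.sum_add_distrib]
        exact Finset.sum_congr rfl fun m _ => by ring
    _ = ((n:ℝ) + 1) * lagP ν (n + 1) x := h3

lemma hasDerivAt_lagP_s3 (ν : ℝ) (n : ℕ) (x : ℝ) :
    HasDerivAt (fun y => lagP ν n y) (lagD ν n x) x := by
  have h : HasDerivAt (fun y => ∑ m ∈ Finset.range (n + 1), lagA ν n m * (-y) ^ m)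
      (lagD ν n x) x := by
    unfold lagD
    refine HasDerivAt.fun_sum fun m _ => ?_
    have h := ((hasDerivAt_pow m (-x)).comp x (hasDerivAt_neg x)).const_mul (lagA ν n m)
    exact h
  simpa only [← lagP_eq] using h

lemma lag_expand (ν : ℝ) (n : ℕ) (e w g x : ℝ) :
    e * w * lagP ν n x * g
      = ∑ m ∈ Finset.range (n + 1), lagA ν n m * (-1) ^ m * (e * w * x ^ m * g) := by
  rw [lagP_eq, Finset.mul_sum, Finset.sum_mul]
  refine Finset.sum_congr rfl fun m _ => ?_
  rw [neg_pow]
  ring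

theorem laguerre_transform_of_x_mul_deriv
    (ν : ℝ) (hν : -1 < ν) (f f' : ℝ → ℝ)
    (hderiv : ∀ x ∈ Set.Ioi (0 : ℝ), HasDerivAt f (f' x) x)
    (hcont : ContinuousOn f' (Set.Ioi 0))
    (hint_f : ∀ j : ℕ,
      IntegrableOn (fun x : ℝ => Real.exp (-x) * x ^ ν * x ^ j * f x) (Set.Ioi 0))
    (hint_f' : ∀ j : ℕ,
      IntegrableOn (fun x : ℝ => Real.exp (-x) * x ^ (ν + 1) * x ^ j * f' x) (Set.Ioi 0))
    (hlim_zero : ∀ j : ℕ,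
      Tendsto (fun x : ℝ => Real.exp (-x) * x ^ (ν + 1) * x ^ j * f x)
        (nhdsWithin 0 (Set.Ioi 0)) (nhds 0))
    (hlim_top : ∀ j : ℕ,
      Tendsto (fun x : ℝ => Real.exp (-x) * x ^ (ν + 1) * x ^ j * f x) atTop (nhds 0)) :
    ∀ n : ℕ, lagC ν n (fun x => x * f' x) =
      (n : ℝ) * lagC ν n f - ((n : ℝ) + 1) * lagC ν (n + 1) f := by
  intro n
  set F : ℝ → ℝ := fun x => Real.exp (-x) * x ^ (ν + 1) * lagP ν n x * f x with hF
  set G1 : ℝ → ℝ := fun x =>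
    Real.exp (-x) * x ^ ν * (((n:ℝ) + 1) * lagP ν (n + 1) x - (n:ℝ) * lagP ν n x) * f x
    with hG1
  set G2 : ℝ → ℝ := fun x =>
    Real.exp (-x) * x ^ ν * lagP ν n x * (x * f' x) with hG2
  -- integrability of e^{-x} x^ν lagP m f
  have int1 : ∀ m : ℕ,
      IntegrableOn (fun x : ℝ => Real.exp (-x) * x ^ ν * lagP ν m x * f x) (Set.Ioi 0) := by
    intro m
    have he : (fun x : ℝ => Real.exp (-x) * x ^ ν * lagP ν m x * f x)
        = fun x : ℝ => ∑ k ∈ Finset.range (m + 1),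
            lagA ν m k * (-1) ^ k * (Real.exp (-x) * x ^ ν * x ^ k * f x) :=
      funext fun x => lag_expand ν m _ _ _ x
    rw [he]
    exact integrable_finset_sum _ fun k _ => (hint_f k).const_mul _
  have intG1 : IntegrableOn G1 (Set.Ioi 0) := by
    have he : G1 = fun x : ℝ =>
        ((n:ℝ) + 1) * (Real.exp (-x) * x ^ ν * lagP ν (n + 1) x * f x)
          - (n:ℝ) * (Real.exp (-x) * x ^ ν * lagP ν n x * f x) := by
      funext x; simp only [hG1]; ring
    rw [he]
    exact ((int1 (n + 1)).const_mul _).sub ((int1 n).const_mul _)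
  have intG2 : IntegrableOn G2 (Set.Ioi 0) := by
    have hsum : IntegrableOn (fun x : ℝ => ∑ k ∈ Finset.range (n + 1),
        lagA ν n k * (-1) ^ k * (Real.exp (-x) * x ^ (ν + 1) * x ^ k * f' x)) (Set.Ioi 0) :=
      integrable_finset_sum _ fun k _ => (hint_f' k).const_mul _
    apply hsum.congr_fun ?_ measurableSet_Ioi
    intro x hx
    have hx' : (0:ℝ) < x := hx
    have hxx : x ^ (ν + 1) = x ^ ν * x := Real.rpow_add_one (ne_of_gt hx') ν
    show (∑ k ∈ Finset.range (n + 1),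
        lagA ν n k * (-1) ^ k * (Real.exp (-x) * x ^ (ν + 1) * x ^ k * f' x)) = G2 x
    rw [← lag_expand ν n _ _ _ x, hxx]
    simp only [hG2]
    ring
  -- limit of F at infinity and at zero
  have hFsum : F = fun x : ℝ => ∑ k ∈ Finset.range (n + 1),
      lagA ν n k * (-1) ^ k * (Real.exp (-x) * x ^ (ν + 1) * x ^ k * f x) :=
    funext fun x => lag_expand ν n _ _ _ x
  have hlimtopF : Tendsto F atTop (nhds 0) := by
    rw [hFsum]
    have := tendsto_finset_sum (Finset.range (n + 1))
      (fun k _ => (hlim_top k).const_mul (lagA ν n k * (-1) ^ k))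
    simpa using this
  have hlimzeroF : Tendsto F (nhdsWithin 0 (Set.Ioi 0)) (nhds 0) := by
    rw [hFsum]
    have := tendsto_finset_sum (Finset.range (n + 1))
      (fun k _ => (hlim_zero k).const_mul (lagA ν n k * (-1) ^ k))
    simpa using this
  have hF0 : F 0 = 0 := by
    simp only [hF]
    rw [Real.zero_rpow (by linarith : ν + 1 ≠ 0)]
    ring
  have hcontF : ContinuousWithinAt F (Set.Ici 0) 0 := by
    unfold ContinuousWithinAt
    rw [show Set.Ici (0:ℝ) = insert 0 (Set.Ioi 0) by
        rw [Set.Ioi_insert], nhdsWithin_insert, Filter.tendsto_sup]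
    exact ⟨tendsto_pure_nhds F 0, by rw [hF0]; exact hlimzeroF⟩
  -- derivative of F
  have hderivF : ∀ x ∈ Set.Ioi (0:ℝ), HasDerivAt F (G1 x + G2 x) x := by
    intro x hx
    have hx' : (0:ℝ) < x := hx
    have h1 : HasDerivAt (fun y : ℝ => Real.exp (-y)) (Real.exp (-x) * -1) x :=
      (Real.hasDerivAt_exp (-x)).comp x (hasDerivAt_neg x)
    have h2 : HasDerivAt (fun y : ℝ => y ^ (ν + 1)) ((ν + 1) * x ^ (ν + 1 - 1)) x :=
      Real.hasDerivAt_rpow_const (Or.inl (ne_of_gt hx'))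
    have h3 := hasDerivAt_lagP_s3 ν n x
    have h4 := hderiv x hx
    have h := ((h1.mul h2).mul h3).mul h4
    refine h.congr_deriv ?_
    symm
    have hν1 : ν + 1 - 1 = ν := by ring
    rw [hν1] at *
    have hxx : x ^ (ν + 1) = x ^ ν * x := Real.rpow_add_one (ne_of_gt hx') ν
    have hkey := lagP_key ν hν n x
    simp only [hG1, hG2, Pi.mul_apply]
    rw [hxx]
    linear_combination (-(Real.exp (-x) * x ^ ν * f x)) * hkey
  -- FTC
  have hFTC : ∫ x in Set.Ioi (0:ℝ), (G1 x + G2 x) = 0 - F 0 :=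
    MeasureTheory.integral_Ioi_of_hasDerivAt_of_tendsto hcontF hderivF
      (intG1.add intG2) hlimtopF
  rw [hF0, sub_zero, MeasureTheory.integral_add intG1 intG2] at hFTC
  have hIG1 : ∫ x in Set.Ioi (0:ℝ), G1 x
      = ((n:ℝ) + 1) * lagC ν (n + 1) f - (n:ℝ) * lagC ν n f := by
    have he : G1 = fun x : ℝ =>
        ((n:ℝ) + 1) * (Real.exp (-x) * x ^ ν * lagP ν (n + 1) x * f x)
          - (n:ℝ) * (Real.exp (-x) * x ^ ν * lagP ν n x * f x) := by
      funext x; simp only [hG1]; ring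
    rw [he, MeasureTheory.integral_sub (((int1 (n + 1)).const_mul _)) ((int1 n).const_mul _),
      MeasureTheory.integral_const_mul, MeasureTheory.integral_const_mul]
    rfl
  have hIG2 : ∫ x in Set.Ioi (0:ℝ), G2 x = lagC ν n (fun x => x * f' x) := rfl
  rw [hIG1, hIG2] at hFTC
  linarith
end

section
/- Let ν > 0 be real and let f : (0,∞) → ℝ be twice continuously differentiable. Assume that for every natural number j the functions x ↦ e^{−x} x^{ν−1} x^j f(x), x ↦ e^{−x} x^{ν} x^j f'(x), and x ↦ e^{−x} x^{ν+1} x^j f''(x) are integrable on (0,∞), and that for every natural number j, both e^{−x} x^{ν} x^j f(x) and e^{−x} x^{ν+1} x^j f'(x) tend to 0 as x → 0⁺ and as x → ∞. Then for every n ∈ ℕ, the n-th Laguerre coefficient of order ν of the function x ↦ x·f''(x) satisfies c_n^ν(x f''(x)) = −(ν+1)·[Σ_{k=0}^{n} c_k^ν(f) − ν Σ_{k=0}^{n} c_k^{ν−1}(f)] − (n+1) c_{n+1}^ν(f). -/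
open Real MeasureTheory Filter Set Finset

namespace LagAux

noncomputable def c (ν : ℝ) (n m : ℕ) : ℝ :=
  (-1 : ℝ) ^ m * Real.Gamma ((n : ℝ) + ν + 1) /
    (Real.Gamma ((m : ℝ) + ν + 1) * Real.Gamma ((n : ℝ) - (m : ℝ) + 1) * (m.factorial : ℝ))

lemma c_eq_zero (ν : ℝ) {n m : ℕ} (h : n < m) : c ν n m = 0 := by
  have h1 : (n : ℝ) - (m : ℝ) + 1 = -((m - n - 1 : ℕ) : ℝ) := by
    have h2 : ((m - n - 1 : ℕ) : ℝ) = (m : ℝ) - n - 1 := by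
      push_cast [Nat.cast_sub (show 1 ≤ m - n by omega), Nat.cast_sub (show n ≤ m by omega)]
      ring
    rw [h2]; ring
  rw [c, h1, Real.Gamma_neg_nat_eq_zero]
  simp

lemma c_cast (ν : ℝ) (m d : ℕ) :
    c ν (m + d) m = (-1 : ℝ) ^ m * Real.Gamma ((m : ℝ) + (d : ℝ) + ν + 1) /
      (Real.Gamma ((m : ℝ) + ν + 1) * (d.factorial : ℝ) * (m.factorial : ℝ)) := by
  rw [c]
  push_cast
  rw [show (m : ℝ) + d - m + 1 = (d : ℝ) + 1 by ring, Real.Gamma_nat_eq_factorial]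

lemma gne {x : ℝ} (hx : 0 < x) : Real.Gamma x ≠ 0 := (Real.Gamma_pos_of_pos hx).ne'

lemma gme {x : ℝ} (hx : 0 < x) : Real.Gamma (x + 1) = x * Real.Gamma x :=
  Real.Gamma_add_one hx.ne'

lemma fne (k : ℕ) : ((k.factorial : ℝ)) ≠ 0 := Nat.cast_ne_zero.mpr (Nat.factorial_ne_zero k)

lemma c_self {ν : ℝ} (hν : -1 < ν) (k : ℕ) :
    c ν k k = (-1 : ℝ) ^ k / (k.factorial : ℝ) := by
  have hk : (0:ℝ) ≤ (k:ℝ) := Nat.cast_nonneg k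
  have h := c_cast ν k 0
  rw [Nat.add_zero] at h
  rw [h, Nat.cast_zero, add_zero, Nat.factorial_zero, Nat.cast_one, mul_one,
    div_eq_div_iff (mul_ne_zero (gne (by linarith : (0:ℝ) < (k:ℝ) + ν + 1)) (fne k)) (fne k)]
  ring

lemma c_top {ν : ℝ} (hν : -1 < ν) (k : ℕ) :
    c ν (k + 1) k = (-1 : ℝ) ^ k * ((k : ℝ) + ν + 1) / (k.factorial : ℝ) := by
  have hk : (0:ℝ) ≤ (k:ℝ) := Nat.cast_nonneg k
  have h := c_cast ν k 1
  rw [h, Nat.cast_one, Nat.factorial_one, Nat.cast_one, mul_one,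
    show (k:ℝ) + 1 + ν + 1 = ((k:ℝ) + ν + 1) + 1 by ring, gme (by linarith)]
  rw [div_eq_div_iff (by exact mul_ne_zero (gne (by linarith)) (fne k)) (fne k)]
  ring
/-- Recurrence in `m`. -/
lemma c_succ_m {ν : ℝ} (hν : -1 < ν) (n m : ℕ) :
    (((m:ℝ) + ν + 1) * ((m:ℝ) + 1)) * c ν n (m + 1) = -((n:ℝ) - (m:ℝ)) * c ν n m := by
  have hm : (0:ℝ) ≤ (m:ℝ) := Nat.cast_nonneg m
  rcases lt_or_ge m n with h | h
  · obtain ⟨d, rfl⟩ := Nat.exists_eq_add_of_le (show m + 1 ≤ n by omega)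
    have hd : (0:ℝ) ≤ (d:ℝ) := Nat.cast_nonneg d
    have hG1 : Real.Gamma ((m:ℝ) + ν + 1) ≠ 0 := gne (by linarith)
    have h1 : c ν (m + 1 + d) (m + 1) =
        (-1:ℝ) ^ m * -1 * Real.Gamma ((m:ℝ) + (d:ℝ) + ν + 2) /
          ((((m:ℝ) + ν + 1) * Real.Gamma ((m:ℝ) + ν + 1)) * (d.factorial : ℝ) *
            (((m:ℝ) + 1) * (m.factorial : ℝ))) := by
      rw [c_cast]
      rw [show ((m + 1 : ℕ) : ℝ) = (m:ℝ) + 1 by push_cast; ring]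
      rw [show (m:ℝ) + 1 + (d:ℝ) + ν + 1 = (m:ℝ) + (d:ℝ) + ν + 2 by ring]
      rw [show (m:ℝ) + 1 + ν + 1 = ((m:ℝ) + ν + 1) + 1 by ring, gme (by linarith)]
      push_cast [Nat.factorial_succ, pow_succ]
      ring
    have h2 : c ν (m + 1 + d) m =
        (-1:ℝ) ^ m * Real.Gamma ((m:ℝ) + (d:ℝ) + ν + 2) /
          (Real.Gamma ((m:ℝ) + ν + 1) * (((d:ℝ) + 1) * (d.factorial : ℝ)) *
            (m.factorial : ℝ)) := by
      rw [show m + 1 + d = m + (d + 1) by omega, c_cast]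
      rw [show ((d + 1 : ℕ) : ℝ) = (d:ℝ) + 1 by push_cast; ring]
      rw [show (m:ℝ) + ((d:ℝ) + 1) + ν + 1 = (m:ℝ) + (d:ℝ) + ν + 2 by ring]
      push_cast [Nat.factorial_succ]
      ring
    rw [h1, h2]
    have hd1 : (d:ℝ) + 1 ≠ 0 := by linarith
    have hm1 : (m:ℝ) + 1 ≠ 0 := by linarith
    have hmn1 : (m:ℝ) + ν + 1 ≠ 0 := by linarith
    push_cast
    field_simp
    ring
  · rcases h.eq_or_lt with rfl | h'
    · rw [c_eq_zero ν (by omega)]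
      push_cast
      ring
    · rw [c_eq_zero ν (by omega), c_eq_zero ν (by omega)]
      ring

/-- Recurrence in `n`. -/
lemma c_succ_n {ν : ℝ} (hν : -1 < ν) (n m : ℕ) :
    ((n:ℝ) - (m:ℝ) + 1) * c ν (n + 1) m = ((n:ℝ) + ν + 1) * c ν n m := by
  have hm : (0:ℝ) ≤ (m:ℝ) := Nat.cast_nonneg m
  rcases le_or_gt m n with h | h
  · obtain ⟨d, rfl⟩ := Nat.exists_eq_add_of_le h
    have hd : (0:ℝ) ≤ (d:ℝ) := Nat.cast_nonneg d
    have hG1 : Real.Gamma ((m:ℝ) + ν + 1) ≠ 0 := gne (by linarith)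
    have h1 : c ν (m + d + 1) m =
        (-1:ℝ) ^ m * (((m:ℝ) + (d:ℝ) + ν + 1) * Real.Gamma ((m:ℝ) + (d:ℝ) + ν + 1)) /
          (Real.Gamma ((m:ℝ) + ν + 1) * (((d:ℝ) + 1) * (d.factorial : ℝ)) *
            (m.factorial : ℝ)) := by
      rw [show m + d + 1 = m + (d + 1) by omega, c_cast]
      rw [show ((d + 1 : ℕ) : ℝ) = (d:ℝ) + 1 by push_cast; ring]
      rw [show (m:ℝ) + ((d:ℝ) + 1) + ν + 1 = ((m:ℝ) + (d:ℝ) + ν + 1) + 1 by ring,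
        gme (by linarith)]
      push_cast [Nat.factorial_succ]
      ring
    rw [h1, c_cast]
    have hd1 : (d:ℝ) + 1 ≠ 0 := by linarith
    push_cast
    field_simp
    ring
  · rcases (show n + 1 ≤ m by omega).eq_or_lt with rfl | h'
    · rw [show c ν n (n + 1) = 0 from c_eq_zero ν (by omega)]
      push_cast
      ring
    · rw [c_eq_zero ν (by omega), c_eq_zero ν (by omega)]
      ring

/-- Recurrence in `ν`. -/
lemma c_succ_nu {ν : ℝ} (hν : -1 < ν) (n m : ℕ) :
    ((m:ℝ) + ν + 1) * c (ν + 1) n m = ((n:ℝ) + ν + 1) * c ν n m := by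
  have hm : (0:ℝ) ≤ (m:ℝ) := Nat.cast_nonneg m
  rcases le_or_gt m n with h | h
  · obtain ⟨d, rfl⟩ := Nat.exists_eq_add_of_le h
    have hd : (0:ℝ) ≤ (d:ℝ) := Nat.cast_nonneg d
    have hG1 : Real.Gamma ((m:ℝ) + ν + 1) ≠ 0 := gne (by linarith)
    have h1 : c (ν + 1) (m + d) m =
        (-1:ℝ) ^ m * (((m:ℝ) + (d:ℝ) + ν + 1) * Real.Gamma ((m:ℝ) + (d:ℝ) + ν + 1)) /
          ((((m:ℝ) + ν + 1) * Real.Gamma ((m:ℝ) + ν + 1)) * (d.factorial : ℝ) *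
            (m.factorial : ℝ)) := by
      rw [c_cast]
      rw [show (m:ℝ) + (d:ℝ) + (ν + 1) + 1 = ((m:ℝ) + (d:ℝ) + ν + 1) + 1 by ring,
        gme (x := (m:ℝ) + (d:ℝ) + ν + 1) (by linarith)]
      rw [show (m:ℝ) + (ν + 1) + 1 = ((m:ℝ) + ν + 1) + 1 by ring,
        gme (x := (m:ℝ) + ν + 1) (by linarith)]
    rw [h1, c_cast]
    have hmn1 : (m:ℝ) + ν + 1 ≠ 0 := by linarith
    field_simp [hG1, fne d, fne m, hmn1]
    push_cast
    ring
  · rw [c_eq_zero ν h, c_eq_zero (ν + 1) h]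
    ring

/-- Pascal-type step identity. -/
lemma sum_step {ν : ℝ} (hν : -1 < ν) (n m : ℕ) :
    c (ν + 1) (n + 1) m = c (ν + 1) n m + c ν (n + 1) m := by
  have hm : (0:ℝ) ≤ (m:ℝ) := Nat.cast_nonneg m
  rcases le_or_gt m n with h | h
  · have hA : (m:ℝ) + ν + 1 ≠ 0 := by linarith
    have hB : (n:ℝ) - (m:ℝ) + 1 ≠ 0 := by
      have : (m:ℝ) ≤ (n:ℝ) := Nat.cast_le.mpr h
      linarith
    have E1 := c_succ_nu hν (n + 1) m
    have E2 := c_succ_nu hν n m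
    have E3 := c_succ_n hν n m
    push_cast at E1
    refine mul_left_cancel₀ (mul_ne_zero hA hB) ?_
    linear_combination ((n:ℝ) - (m:ℝ) + 1) * E1 - ((n:ℝ) - (m:ℝ) + 1) * E2 +
      ((n:ℝ) + ν + 2 - ((m:ℝ) + ν + 1)) * E3
  · rcases (show n + 1 ≤ m by omega).eq_or_lt with rfl | h'
    · have hA : (n:ℝ) + 1 + ν + 1 ≠ 0 := by
        have : (0:ℝ) ≤ (n:ℝ) := Nat.cast_nonneg n
        linarith
      have E1 := c_succ_nu hν (n + 1) (n + 1)
      push_cast at E1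
      rw [c_eq_zero (ν + 1) h, zero_add]
      exact mul_left_cancel₀ hA E1
    · rw [c_eq_zero (ν + 1) (by omega), c_eq_zero (ν + 1) h, c_eq_zero ν (by omega)]
      ring

lemma sum_c {ν : ℝ} (hν : -1 < ν) (n m : ℕ) :
    ∑ k ∈ Finset.range (n + 1), c ν k m = c (ν + 1) n m := by
  induction n with
  | zero =>
    rw [Finset.sum_range_one]
    rcases Nat.eq_zero_or_pos m with rfl | hmp
    · rw [c_self hν, c_self (by linarith : (-1:ℝ) < ν + 1)]
    · rw [c_eq_zero ν (by omega), c_eq_zero (ν + 1) (by omega)]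
  | succ n ih =>
    rw [Finset.sum_range_succ, ih, ← sum_step hν]


noncomputable def ell (ν : ℝ) (n m : ℕ) : ℝ :=
  ((ν + (m:ℝ) + 1) * (ν + (m:ℝ)) - ν * (ν + 1)) * c ν n m

noncomputable def mu (ν : ℝ) (n m : ℕ) : ℝ :=
  -2 * (ν + (m:ℝ) + 1) * c ν n m + (ν + 1) * c (ν + 1) n m + ((n : ℝ) + 1) * c ν (n + 1) m

lemma ell_zero (ν : ℝ) (n : ℕ) : ell ν n 0 = 0 := by
  rw [ell]; push_cast; ring

lemma ell_eq_zero (ν : ℝ) {n m : ℕ} (h : n < m) : ell ν n m = 0 := by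
  rw [ell, c_eq_zero ν h, mul_zero]

lemma mu_eq_zero (ν : ℝ) {n m : ℕ} (h : n + 1 < m) : mu ν n m = 0 := by
  rw [mu, c_eq_zero ν (by omega), c_eq_zero (ν + 1) (by omega), c_eq_zero ν (by omega)]
  ring

lemma I1 {ν : ℝ} (hν : 0 < ν) (n : ℕ) : ell ν n 1 + mu ν n 0 = 0 := by
  have hν' : (-1:ℝ) < ν := by linarith
  have hn : (0:ℝ) ≤ (n:ℝ) := Nat.cast_nonneg n
  have R1 := c_succ_m hν' n 0
  have R3 := c_succ_nu hν' n 0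
  have R4 := c_succ_n hν' n 0
  push_cast at R1 R3 R4
  have hM : (ν + 1) * ((n:ℝ) + 1) ≠ 0 := by positivity
  have key : (ν + 1) * ((n:ℝ) + 1) * (ell ν n 1 + mu ν n 0) =
      (ν + 1) * ((n:ℝ) + 1) * 0 := by
    rw [ell, mu]
    push_cast
    linear_combination (2 * (ν + 1) * ((n:ℝ) + 1)) * R1 + ((ν + 1) * ((n:ℝ) + 1)) * R3 +
      ((ν + 1) * ((n:ℝ) + 1)) * R4
  exact mul_left_cancel₀ hM key

lemma I2 {ν : ℝ} (hν : 0 < ν) (n m : ℕ) :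
    ell ν n (m + 2) + mu ν n (m + 1) + c ν n m = 0 := by
  have hν' : (-1:ℝ) < ν := by linarith
  have hm : (0:ℝ) ≤ (m:ℝ) := Nat.cast_nonneg m
  rcases eq_or_ne n m with rfl | hne
  · -- m = n
    rw [ell_eq_zero ν (by omega), mu,
      show c ν n (n + 1) = 0 from c_eq_zero ν (by omega),
      show c (ν + 1) n (n + 1) = 0 from c_eq_zero (ν + 1) (by omega),
      c_self hν' (n + 1), c_self hν' n]
    push_cast [Nat.factorial_succ, pow_succ]
    field_simp
    ring
  · have R1 := c_succ_m hν' n m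
    have R2 := c_succ_m hν' n (m + 1)
    have R3 := c_succ_nu hν' n (m + 1)
    have R4 := c_succ_n hν' n (m + 1)
    rw [show m + 1 + 1 = m + 2 by omega] at R2
    push_cast at R1 R2 R3 R4
    have hB : (n:ℝ) - (m:ℝ) ≠ 0 := by
      have : (n:ℝ) ≠ (m:ℝ) := by exact_mod_cast hne
      exact sub_ne_zero.mpr this
    have h1 : (m:ℝ) + ν + 1 ≠ 0 := by linarith
    have h2 : (m:ℝ) + ν + 2 ≠ 0 := by linarith
    have h3 : (m:ℝ) + 1 ≠ 0 := by linarith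
    have h4 : (m:ℝ) + 2 ≠ 0 := by linarith
    set A1 : ℝ := ((m:ℝ) + ν + 1) * ((m:ℝ) + 1) with hA1
    set A2 : ℝ := ((m:ℝ) + ν + 2) * ((m:ℝ) + 2) with hA2
    set C2 : ℝ := (m:ℝ) + ν + 2 with hC2
    set B : ℝ := (n:ℝ) - (m:ℝ) with hB'
    set al : ℝ := (ν + (m:ℝ) + 3) * (ν + (m:ℝ) + 2) - ν * (ν + 1) with hal
    have hM : (A1 * A2) * (C2 * B) ≠ 0 := by
      apply mul_ne_zero (mul_ne_zero (mul_ne_zero h1 h3) (mul_ne_zero h2 h4))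
        (mul_ne_zero h2 hB)
    have key : (A1 * A2) * (C2 * B) * (ell ν n (m + 2) + mu ν n (m + 1) + c ν n m) =
        (A1 * A2) * (C2 * B) * 0 := by
      rw [ell, mu]
      push_cast
      linear_combination
        (-al * C2 * B * (B - 1) + A2 * C2 * B * (-2 * (ν + (m:ℝ) + 2)) +
          A2 * B * (ν + 1) * ((n:ℝ) + ν + 1) + A2 * C2 * ((n:ℝ) + 1) * ((n:ℝ) + ν + 1)) * R1 +
        (al * A1 * C2 * B) * R2 +
        (A1 * A2 * B * (ν + 1)) * R3 +
        (A1 * A2 * C2 * ((n:ℝ) + 1)) * R4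
    exact mul_left_cancel₀ hM key


lemma ALG {ν : ℝ} (hν : 0 < ν) (n : ℕ) (A : ℕ → ℝ) :
    ∑ m ∈ Finset.range (n + 3), c ν n m *
        (A (m + 2) - 2 * (ν + (m:ℝ) + 1) * A (m + 1) + (ν + (m:ℝ) + 1) * (ν + (m:ℝ)) * A m) =
      -(ν + 1) * ((∑ m ∈ Finset.range (n + 3), c (ν + 1) n m * A (m + 1)) -
          ν * ∑ m ∈ Finset.range (n + 3), c ν n m * A m) -
        ((n : ℝ) + 1) * ∑ m ∈ Finset.range (n + 3), c ν (n + 1) m * A (m + 1) := by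
  have t3 : ∑ m ∈ Finset.range (n + 3), ell ν n m * A m =
      (∑ m ∈ Finset.range (n + 1), ell ν n (m + 2) * A (m + 2)) + ell ν n 1 * A 1 := by
    rw [Finset.sum_range_succ' (fun m => ell ν n m * A m) (n + 2), ell_zero, zero_mul, add_zero,
      Finset.sum_range_succ' (fun m => ell ν n (m + 1) * A (m + 1)) (n + 1)]
  have t2 : ∑ m ∈ Finset.range (n + 3), mu ν n m * A (m + 1) =
      (∑ m ∈ Finset.range (n + 2), mu ν n (m + 1) * A (m + 2)) + mu ν n 0 * A 1 := by
    rw [Finset.sum_range_succ' (fun m => mu ν n m * A (m + 1)) (n + 2)]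
  have ext3 : ∑ m ∈ Finset.range (n + 1), ell ν n (m + 2) * A (m + 2) =
      ∑ m ∈ Finset.range (n + 3), ell ν n (m + 2) * A (m + 2) := by
    apply Finset.sum_subset
    · intro x hx
      simp only [Finset.mem_range] at *
      omega
    · intro x hx hnx
      simp only [Finset.mem_range] at hx hnx
      rw [ell_eq_zero ν (by omega), zero_mul]
  have ext2 : ∑ m ∈ Finset.range (n + 2), mu ν n (m + 1) * A (m + 2) =
      ∑ m ∈ Finset.range (n + 3), mu ν n (m + 1) * A (m + 2) := by
    apply Finset.sum_subset
    · intro x hx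
      simp only [Finset.mem_range] at *
      omega
    · intro x hx hnx
      simp only [Finset.mem_range] at hx hnx
      rw [mu_eq_zero ν (by omega), zero_mul]
  have key : ∑ m ∈ Finset.range (n + 3),
      (c ν n m * A (m + 2) + mu ν n m * A (m + 1) + ell ν n m * A m) = 0 := by
    rw [Finset.sum_add_distrib, Finset.sum_add_distrib, t2, t3, ext2, ext3]
    have merged : ∑ m ∈ Finset.range (n + 3), c ν n m * A (m + 2) +
        ∑ m ∈ Finset.range (n + 3), mu ν n (m + 1) * A (m + 2) +
        ∑ m ∈ Finset.range (n + 3), ell ν n (m + 2) * A (m + 2) =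
        ∑ m ∈ Finset.range (n + 3),
          ((ell ν n (m + 2) + mu ν n (m + 1) + c ν n m) * A (m + 2)) := by
      rw [← Finset.sum_add_distrib, ← Finset.sum_add_distrib]
      exact Finset.sum_congr rfl fun m _ => by ring
    have zer : ∑ m ∈ Finset.range (n + 3),
        ((ell ν n (m + 2) + mu ν n (m + 1) + c ν n m) * A (m + 2)) = 0 :=
      Finset.sum_eq_zero fun m _ => by rw [I2 hν n m, zero_mul]
    have hI1 := I1 hν n
    calc ∑ m ∈ Finset.range (n + 3), c ν n m * A (m + 2) +
          ((∑ m ∈ Finset.range (n + 3), mu ν n (m + 1) * A (m + 2)) + mu ν n 0 * A 1) +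
          ((∑ m ∈ Finset.range (n + 3), ell ν n (m + 2) * A (m + 2)) + ell ν n 1 * A 1)
        = (∑ m ∈ Finset.range (n + 3), c ν n m * A (m + 2) +
            ∑ m ∈ Finset.range (n + 3), mu ν n (m + 1) * A (m + 2) +
            ∑ m ∈ Finset.range (n + 3), ell ν n (m + 2) * A (m + 2)) +
            (ell ν n 1 + mu ν n 0) * A 1 := by ring
      _ = 0 := by rw [merged, zer, hI1, zero_mul, add_zero]
  have expand : ∑ m ∈ Finset.range (n + 3),
      (c ν n m * A (m + 2) + mu ν n m * A (m + 1) + ell ν n m * A m) =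
      (∑ m ∈ Finset.range (n + 3), c ν n m *
        (A (m + 2) - 2 * (ν + (m:ℝ) + 1) * A (m + 1) + (ν + (m:ℝ) + 1) * (ν + (m:ℝ)) * A m)) +
      (ν + 1) * (∑ m ∈ Finset.range (n + 3), c (ν + 1) n m * A (m + 1)) -
      (ν + 1) * ν * (∑ m ∈ Finset.range (n + 3), c ν n m * A m) +
      ((n : ℝ) + 1) * (∑ m ∈ Finset.range (n + 3), c ν (n + 1) m * A (m + 1)) := by
    rw [Finset.mul_sum, Finset.mul_sum, Finset.mul_sum, ← Finset.sum_add_distrib,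
      ← Finset.sum_sub_distrib, ← Finset.sum_add_distrib]
    exact Finset.sum_congr rfl fun m _ => by rw [mu, ell]; push_cast; ring
  rw [expand] at key
  linarith [key]

lemma integral_Ioi_deriv_zero {H H' : ℝ → ℝ}
    (hd : ∀ x ∈ Set.Ioi (0:ℝ), HasDerivAt H (H' x) x)
    (hi : IntegrableOn H' (Set.Ioi (0:ℝ)))
    (h0 : Tendsto H (nhdsWithin 0 (Set.Ioi 0)) (nhds 0))
    (htop : Tendsto H atTop (nhds 0)) :
    ∫ x in Set.Ioi (0:ℝ), H' x = 0 := by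
  have key : ∀ a : ℝ, 0 < a → ∫ x in Set.Ioi a, H' x = - H a := by
    intro a ha
    have h1 : ∫ x in Set.Ioi a, H' x = 0 - H a :=
      MeasureTheory.integral_Ioi_of_hasDerivAt_of_tendsto
        ((hd a ha).continuousAt.continuousWithinAt)
        (fun x hx => hd x (lt_trans ha hx))
        (hi.mono_set (Set.Ioi_subset_Ioi ha.le)) htop
    rw [h1]; ring
  set u : ℕ → ℝ := fun k => 1 / ((k : ℝ) + 1) with hu
  have hupos : ∀ k, 0 < u k := fun k => by positivity
  have humono : Monotone fun k => Set.Ioi (u k) := by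
    intro i j hij
    apply Set.Ioi_subset_Ioi
    apply one_div_le_one_div_of_le (by positivity)
    have : (i:ℝ) ≤ (j:ℝ) := Nat.cast_le.mpr hij
    linarith
  have hunion : (⋃ k, Set.Ioi (u k)) = Set.Ioi (0:ℝ) := by
    ext x
    simp only [Set.mem_iUnion, Set.mem_Ioi]
    constructor
    · rintro ⟨k, hk⟩
      exact lt_trans (hupos k) hk
    · intro hx
      obtain ⟨k, hk⟩ := exists_nat_one_div_lt hx
      exact ⟨k, hk⟩
  have hlim1 : Tendsto (fun k => ∫ x in Set.Ioi (u k), H' x) atTop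
      (nhds (∫ x in Set.Ioi (0:ℝ), H' x)) := by
    have h := MeasureTheory.tendsto_setIntegral_of_monotone
      (fun k : ℕ => measurableSet_Ioi (a := u k)) humono (by rw [hunion]; exact hi)
    rwa [hunion] at h
  have hlim2 : Tendsto (fun k => ∫ x in Set.Ioi (u k), H' x) atTop (nhds 0) := by
    have hseq : Tendsto u atTop (nhdsWithin 0 (Set.Ioi 0)) := by
      apply tendsto_nhdsWithin_of_tendsto_nhds_of_eventually_within
      · exact tendsto_one_div_add_atTop_nhds_zero_nat
      · exact Filter.Eventually.of_forall fun k => hupos k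
    have h2 : Tendsto (fun k => - H (u k)) atTop (nhds (-0)) := (h0.comp hseq).neg
    rw [neg_zero] at h2
    exact h2.congr fun k => (key (u k) (hupos k)).symm
  exact tendsto_nhds_unique hlim1 hlim2

noncomputable def Jint (γ : ℝ) (g : ℝ → ℝ) : ℝ :=
  ∫ x in Set.Ioi (0:ℝ), Real.exp (-x) * x ^ γ * g x

lemma ibp (γ : ℝ) (hγ : 0 < γ) (g g' : ℝ → ℝ)
    (hg : ∀ x ∈ Set.Ioi (0:ℝ), HasDerivAt g (g' x) x)
    (h1 : IntegrableOn (fun x : ℝ => Real.exp (-x) * x ^ (γ - 1) * g x) (Set.Ioi 0))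
    (h2 : IntegrableOn (fun x : ℝ => Real.exp (-x) * x ^ γ * g x) (Set.Ioi 0))
    (h3 : IntegrableOn (fun x : ℝ => Real.exp (-x) * x ^ γ * g' x) (Set.Ioi 0))
    (hl0 : Tendsto (fun x : ℝ => Real.exp (-x) * x ^ γ * g x)
      (nhdsWithin 0 (Set.Ioi 0)) (nhds 0))
    (hltop : Tendsto (fun x : ℝ => Real.exp (-x) * x ^ γ * g x) atTop (nhds 0)) :
    Jint γ g' = Jint γ g - γ * Jint (γ - 1) g := by
  have hd : ∀ x ∈ Set.Ioi (0:ℝ), HasDerivAt (fun x : ℝ => Real.exp (-x) * x ^ γ * g x)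
      (γ * (Real.exp (-x) * x ^ (γ - 1) * g x) - Real.exp (-x) * x ^ γ * g x +
        Real.exp (-x) * x ^ γ * g' x) x := by
    intro x hx
    have hx0 : (0:ℝ) < x := hx
    have d1 : HasDerivAt (fun y : ℝ => Real.exp (-y)) (-Real.exp (-x)) x := by
      simpa [Function.comp_def] using (Real.hasDerivAt_exp (-x)).comp x (hasDerivAt_neg x)
    have d2 : HasDerivAt (fun y : ℝ => y ^ γ) (γ * x ^ (γ - 1)) x :=
      Real.hasDerivAt_rpow_const (Or.inl hx0.ne')
    have d := (d1.mul d2).mul (hg x hx)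
    refine d.congr_deriv ?_
    show _ + Real.exp (-x) * x ^ γ * g' x = _
    ring
  have hDint : IntegrableOn (fun x : ℝ => γ * (Real.exp (-x) * x ^ (γ - 1) * g x) -
      Real.exp (-x) * x ^ γ * g x + Real.exp (-x) * x ^ γ * g' x) (Set.Ioi (0:ℝ)) :=
    ((h1.const_mul γ).sub h2).add h3
  have hzero := integral_Ioi_deriv_zero hd hDint hl0 hltop
  have hI1 : Integrable (fun x : ℝ => γ * (Real.exp (-x) * x ^ (γ - 1) * g x))
      (volume.restrict (Set.Ioi 0)) := h1.const_mul γ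
  have hI12 : Integrable (fun x : ℝ => γ * (Real.exp (-x) * x ^ (γ - 1) * g x) -
      Real.exp (-x) * x ^ γ * g x) (volume.restrict (Set.Ioi 0)) := hI1.sub h2
  rw [MeasureTheory.integral_add hI12 h3, MeasureTheory.integral_sub hI1 h2,
    MeasureTheory.integral_const_mul] at hzero
  have e1 : Jint γ g' = ∫ x in Set.Ioi (0:ℝ), Real.exp (-x) * x ^ γ * g' x := rfl
  have e2 : Jint γ g = ∫ x in Set.Ioi (0:ℝ), Real.exp (-x) * x ^ γ * g x := rfl
  have e3 : Jint (γ - 1) g = ∫ x in Set.Ioi (0:ℝ), Real.exp (-x) * x ^ (γ - 1) * g x := rfl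
  rw [e1, e2, e3]
  linarith [hzero]

lemma c_eq (δ : ℝ) {n m : ℕ} (h : m ≤ n) :
    c δ n m = Real.Gamma ((n : ℝ) + δ + 1) /
      (Real.Gamma ((m : ℝ) + δ + 1) * ((n - m).factorial : ℝ) * (m.factorial : ℝ)) *
      (-1:ℝ) ^ m := by
  rw [c, show (n:ℝ) - m + 1 = ((n - m : ℕ) : ℝ) + 1 by rw [Nat.cast_sub h],
    Real.Gamma_nat_eq_factorial]
  ring

lemma lagC_expand (δ : ℝ) (n : ℕ) (g : ℝ → ℝ)
    (hint : ∀ m : ℕ, IntegrableOn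
      (fun x : ℝ => Real.exp (-x) * x ^ δ * x ^ m * g x) (Set.Ioi 0)) :
    lagC δ n g = ∑ m ∈ Finset.range (n + 1), c δ n m *
      ∫ x in Set.Ioi (0:ℝ), Real.exp (-x) * x ^ δ * x ^ m * g x := by
  have hrw : ∀ x : ℝ, Real.exp (-x) * x ^ δ * lagP δ n x * g x =
      ∑ m ∈ Finset.range (n + 1),
        (Real.Gamma ((n : ℝ) + δ + 1) /
          (Real.Gamma ((m : ℝ) + δ + 1) * ((n - m).factorial : ℝ) * (m.factorial : ℝ)) *
          (-1:ℝ) ^ m) * (Real.exp (-x) * x ^ δ * x ^ m * g x) := by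
    intro x
    rw [lagP, Finset.mul_sum, Finset.sum_mul]
    refine Finset.sum_congr rfl fun m _ => ?_
    rw [neg_pow]
    ring
  rw [lagC]
  simp only [hrw]
  rw [MeasureTheory.integral_finset_sum _ (fun m _ => (hint m).const_mul _)]
  refine Finset.sum_congr rfl fun m hm => ?_
  rw [MeasureTheory.integral_const_mul, c_eq δ (by simp only [Finset.mem_range] at hm; omega)]

end LagAux

open LagAux

theorem laguerre_transform_of_x_mul_second_deriv
    (ν : ℝ) (hν : 0 < ν) (f f' f'' : ℝ → ℝ)
    (hderiv : ∀ x ∈ Set.Ioi (0 : ℝ), HasDerivAt f (f' x) x)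
    (hderiv' : ∀ x ∈ Set.Ioi (0 : ℝ), HasDerivAt f' (f'' x) x)
    (hcont : ContinuousOn f'' (Set.Ioi 0))
    (hint_f : ∀ j : ℕ,
      IntegrableOn (fun x : ℝ => Real.exp (-x) * x ^ (ν - 1) * x ^ j * f x) (Set.Ioi 0))
    (hint_f' : ∀ j : ℕ,
      IntegrableOn (fun x : ℝ => Real.exp (-x) * x ^ ν * x ^ j * f' x) (Set.Ioi 0))
    (hint_f'' : ∀ j : ℕ,
      IntegrableOn (fun x : ℝ => Real.exp (-x) * x ^ (ν + 1) * x ^ j * f'' x) (Set.Ioi 0))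
    (hlim_f_zero : ∀ j : ℕ,
      Tendsto (fun x : ℝ => Real.exp (-x) * x ^ ν * x ^ j * f x)
        (nhdsWithin 0 (Set.Ioi 0)) (nhds 0))
    (hlim_f_top : ∀ j : ℕ,
      Tendsto (fun x : ℝ => Real.exp (-x) * x ^ ν * x ^ j * f x) atTop (nhds 0))
    (hlim_f'_zero : ∀ j : ℕ,
      Tendsto (fun x : ℝ => Real.exp (-x) * x ^ (ν + 1) * x ^ j * f' x)
        (nhdsWithin 0 (Set.Ioi 0)) (nhds 0))
    (hlim_f'_top : ∀ j : ℕ,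
      Tendsto (fun x : ℝ => Real.exp (-x) * x ^ (ν + 1) * x ^ j * f' x) atTop (nhds 0)) :
    ∀ n : ℕ, lagC ν n (fun x => x * f'' x) =
      -(ν + 1) * ((∑ k ∈ Finset.range (n + 1), lagC ν k f) -
          ν * ∑ k ∈ Finset.range (n + 1), lagC (ν - 1) k f) -
        ((n : ℝ) + 1) * lagC ν (n + 1) f := by
  intro n
  have hν' : (-1:ℝ) < ν := by linarith
  have heq : ∀ (δ : ℝ) (j : ℕ) (g : ℝ → ℝ), Set.EqOn
      (fun x : ℝ => Real.exp (-x) * x ^ δ * x ^ j * g x)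
      (fun x : ℝ => Real.exp (-x) * x ^ (δ + (j:ℝ)) * g x) (Set.Ioi 0) := by
    intro δ j g x hx
    have hx0 : (0:ℝ) < x := hx
    simp only
    rw [Real.rpow_add hx0, Real.rpow_natCast]
    ring
  have hJf : ∀ j : ℕ, IntegrableOn
      (fun x : ℝ => Real.exp (-x) * x ^ (ν - 1 + (j:ℝ)) * f x) (Set.Ioi 0) :=
    fun j => (hint_f j).congr_fun (heq (ν - 1) j f) measurableSet_Ioi
  have hJf' : ∀ j : ℕ, IntegrableOn
      (fun x : ℝ => Real.exp (-x) * x ^ (ν + (j:ℝ)) * f' x) (Set.Ioi 0) :=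
    fun j => (hint_f' j).congr_fun (heq ν j f') measurableSet_Ioi
  have hJf'' : ∀ j : ℕ, IntegrableOn
      (fun x : ℝ => Real.exp (-x) * x ^ (ν + 1 + (j:ℝ)) * f'' x) (Set.Ioi 0) :=
    fun j => (hint_f'' j).congr_fun (heq (ν + 1) j f'') measurableSet_Ioi
  have hL0 : ∀ j : ℕ, Tendsto (fun x : ℝ => Real.exp (-x) * x ^ (ν + (j:ℝ)) * f x)
      (nhdsWithin 0 (Set.Ioi 0)) (nhds 0) := by
    intro j
    refine (hlim_f_zero j).congr' ?_
    filter_upwards [self_mem_nhdsWithin] with x hx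
    exact heq ν j f hx
  have hLtop : ∀ j : ℕ, Tendsto (fun x : ℝ => Real.exp (-x) * x ^ (ν + (j:ℝ)) * f x)
      atTop (nhds 0) := by
    intro j
    refine (hlim_f_top j).congr' ?_
    filter_upwards [eventually_gt_atTop 0] with x hx
    exact heq ν j f hx
  have hL0' : ∀ j : ℕ, Tendsto (fun x : ℝ => Real.exp (-x) * x ^ (ν + 1 + (j:ℝ)) * f' x)
      (nhdsWithin 0 (Set.Ioi 0)) (nhds 0) := by
    intro j
    refine (hlim_f'_zero j).congr' ?_
    filter_upwards [self_mem_nhdsWithin] with x hx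
    exact heq (ν + 1) j f' hx
  have hLtop' : ∀ j : ℕ, Tendsto (fun x : ℝ => Real.exp (-x) * x ^ (ν + 1 + (j:ℝ)) * f' x)
      atTop (nhds 0) := by
    intro j
    refine (hlim_f'_top j).congr' ?_
    filter_upwards [eventually_gt_atTop 0] with x hx
    exact heq (ν + 1) j f' hx
  have hA1 : ∀ j : ℕ, Jint (ν + (j:ℝ)) f = Jint (ν - 1 + ((j + 1 : ℕ) : ℝ)) f := by
    intro j
    rw [show ν - 1 + ((j + 1 : ℕ) : ℝ) = ν + (j:ℝ) by push_cast; ring]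
  have hB : ∀ j : ℕ, Jint (ν + (j:ℝ)) f' =
      Jint (ν - 1 + ((j + 1 : ℕ) : ℝ)) f - (ν + (j:ℝ)) * Jint (ν - 1 + (j:ℝ)) f := by
    intro j
    have hj : (0:ℝ) ≤ (j:ℝ) := Nat.cast_nonneg j
    have h := ibp (ν + (j:ℝ)) (by linarith) f f' hderiv
      (by rw [show ν + (j:ℝ) - 1 = ν - 1 + (j:ℝ) by ring]; exact hJf j)
      (by rw [show ν + (j:ℝ) = ν - 1 + ((j + 1 : ℕ) : ℝ) by push_cast; ring]; exact hJf (j + 1))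
      (hJf' j) (hL0 j) (hLtop j)
    rw [h, hA1 j, show ν + (j:ℝ) - 1 = ν - 1 + (j:ℝ) by ring]
  have hC : ∀ j : ℕ, Jint (ν + 1 + (j:ℝ)) f'' =
      Jint (ν - 1 + ((j + 2 : ℕ) : ℝ)) f - 2 * (ν + (j:ℝ) + 1) * Jint (ν - 1 + ((j + 1 : ℕ) : ℝ)) f +
        (ν + (j:ℝ) + 1) * (ν + (j:ℝ)) * Jint (ν - 1 + (j:ℝ)) f := by
    intro j
    have hj : (0:ℝ) ≤ (j:ℝ) := Nat.cast_nonneg j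
    have h := ibp (ν + 1 + (j:ℝ)) (by linarith) f' f'' hderiv'
      (by rw [show ν + 1 + (j:ℝ) - 1 = ν + (j:ℝ) by ring]; exact hJf' j)
      (by rw [show ν + 1 + (j:ℝ) = ν + ((j + 1 : ℕ) : ℝ) by push_cast; ring]; exact hJf' (j + 1))
      (hJf'' j) (hL0' j) (hLtop' j)
    rw [h, show ν + 1 + (j:ℝ) - 1 = ν + (j:ℝ) by ring,
      show ν + 1 + (j:ℝ) = ν + ((j + 1 : ℕ) : ℝ) by push_cast; ring,
      hB (j + 1), hB j, show (j + 1) + 1 = j + 2 by omega]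
    push_cast
    ring
  -- expansions of the Laguerre coefficients
  have e2 : ∀ k : ℕ, lagC ν k f =
      ∑ m ∈ Finset.range (k + 1), c ν k m * Jint (ν - 1 + ((m + 1 : ℕ) : ℝ)) f := by
    intro k
    rw [lagC_expand ν k f (fun m => (hJf (m + 1)).congr_fun (fun x hx => by
      have hx0 : (0:ℝ) < x := hx
      beta_reduce
      rw [show ν - 1 + ((m + 1 : ℕ) : ℝ) = ν + (m:ℝ) by push_cast; ring,
        Real.rpow_add hx0, Real.rpow_natCast]
      ring) measurableSet_Ioi)]
    refine Finset.sum_congr rfl fun m hm => ?_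
    congr 1
    rw [← hA1 m]
    exact MeasureTheory.setIntegral_congr_fun measurableSet_Ioi (heq ν m f)
  have e3 : ∀ k : ℕ, lagC (ν - 1) k f =
      ∑ m ∈ Finset.range (k + 1), c (ν - 1) k m * Jint (ν - 1 + (m:ℝ)) f := by
    intro k
    rw [lagC_expand (ν - 1) k f (fun m => hint_f m)]
    refine Finset.sum_congr rfl fun m hm => ?_
    congr 1
    exact MeasureTheory.setIntegral_congr_fun measurableSet_Ioi (heq (ν - 1) m f)
  have e7 : lagC ν n (fun x => x * f'' x) =
      ∑ m ∈ Finset.range (n + 1), c ν n m * Jint (ν + 1 + (m:ℝ)) f'' := by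
    rw [lagC_expand ν n _ (fun m => (hJf'' m).congr_fun (fun x hx => by
      have hx0 : (0:ℝ) < x := hx
      beta_reduce
      rw [Real.rpow_add hx0, Real.rpow_natCast, Real.rpow_add hx0, Real.rpow_one]
      ring) measurableSet_Ioi)]
    refine Finset.sum_congr rfl fun m hm => ?_
    congr 1
    refine MeasureTheory.setIntegral_congr_fun measurableSet_Ioi (fun x hx => ?_)
    have hx0 : (0:ℝ) < x := hx
    rw [Real.rpow_add hx0, Real.rpow_natCast, Real.rpow_add hx0, Real.rpow_one]
    ring
  have e4 : ∑ k ∈ Finset.range (n + 1), lagC ν k f =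
      ∑ m ∈ Finset.range (n + 3), c (ν + 1) n m * Jint (ν - 1 + ((m + 1 : ℕ) : ℝ)) f := by
    calc ∑ k ∈ Finset.range (n + 1), lagC ν k f
        = ∑ k ∈ Finset.range (n + 1), ∑ m ∈ Finset.range (n + 3),
            c ν k m * Jint (ν - 1 + ((m + 1 : ℕ) : ℝ)) f := by
          refine Finset.sum_congr rfl fun k hk => ?_
          rw [e2 k]
          refine Finset.sum_subset (Finset.range_subset_range.mpr ?_) ?_
          · simp only [Finset.mem_range] at hk; omega
          · intro x hx hnx
            simp only [Finset.mem_range] at hx hnx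
            rw [c_eq_zero ν (by omega), zero_mul]
      _ = ∑ m ∈ Finset.range (n + 3), ∑ k ∈ Finset.range (n + 1),
            c ν k m * Jint (ν - 1 + ((m + 1 : ℕ) : ℝ)) f := Finset.sum_comm
      _ = ∑ m ∈ Finset.range (n + 3), c (ν + 1) n m * Jint (ν - 1 + ((m + 1 : ℕ) : ℝ)) f := by
          refine Finset.sum_congr rfl fun m hm => ?_
          rw [← Finset.sum_mul, sum_c hν' n m]
  have e5 : ∑ k ∈ Finset.range (n + 1), lagC (ν - 1) k f =
      ∑ m ∈ Finset.range (n + 3), c ν n m * Jint (ν - 1 + (m:ℝ)) f := by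
    calc ∑ k ∈ Finset.range (n + 1), lagC (ν - 1) k f
        = ∑ k ∈ Finset.range (n + 1), ∑ m ∈ Finset.range (n + 3),
            c (ν - 1) k m * Jint (ν - 1 + (m:ℝ)) f := by
          refine Finset.sum_congr rfl fun k hk => ?_
          rw [e3 k]
          refine Finset.sum_subset (Finset.range_subset_range.mpr ?_) ?_
          · simp only [Finset.mem_range] at hk; omega
          · intro x hx hnx
            simp only [Finset.mem_range] at hx hnx
            rw [c_eq_zero (ν - 1) (by omega), zero_mul]
      _ = ∑ m ∈ Finset.range (n + 3), ∑ k ∈ Finset.range (n + 1),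
            c (ν - 1) k m * Jint (ν - 1 + (m:ℝ)) f := Finset.sum_comm
      _ = ∑ m ∈ Finset.range (n + 3), c ν n m * Jint (ν - 1 + (m:ℝ)) f := by
          refine Finset.sum_congr rfl fun m hm => ?_
          rw [← Finset.sum_mul, sum_c (by linarith : (-1:ℝ) < ν - 1) n m, sub_add_cancel]
  have e6 : lagC ν (n + 1) f =
      ∑ m ∈ Finset.range (n + 3), c ν (n + 1) m * Jint (ν - 1 + ((m + 1 : ℕ) : ℝ)) f := by
    rw [e2 (n + 1)]
    refine Finset.sum_subset (Finset.range_subset_range.mpr (by omega)) ?_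
    intro x hx hnx
    simp only [Finset.mem_range] at hx hnx
    rw [c_eq_zero ν (by omega), zero_mul]
  have e8 : lagC ν n (fun x => x * f'' x) =
      ∑ m ∈ Finset.range (n + 3), c ν n m *
        (Jint (ν - 1 + ((m + 2 : ℕ) : ℝ)) f - 2 * (ν + (m:ℝ) + 1) * Jint (ν - 1 + ((m + 1 : ℕ) : ℝ)) f +
          (ν + (m:ℝ) + 1) * (ν + (m:ℝ)) * Jint (ν - 1 + (m:ℝ)) f) := by
    rw [e7]
    calc ∑ m ∈ Finset.range (n + 1), c ν n m * Jint (ν + 1 + (m:ℝ)) f''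
        = ∑ m ∈ Finset.range (n + 1), c ν n m *
            (Jint (ν - 1 + ((m + 2 : ℕ) : ℝ)) f -
              2 * (ν + (m:ℝ) + 1) * Jint (ν - 1 + ((m + 1 : ℕ) : ℝ)) f +
              (ν + (m:ℝ) + 1) * (ν + (m:ℝ)) * Jint (ν - 1 + (m:ℝ)) f) :=
          Finset.sum_congr rfl fun m _ => by rw [hC m]
      _ = _ := by
          refine Finset.sum_subset (Finset.range_subset_range.mpr (by omega)) ?_
          intro x hx hnx
          simp only [Finset.mem_range] at hx hnx
          rw [c_eq_zero ν (by omega), zero_mul]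
  rw [e8, e4, e5, e6]
  exact ALG hν n (fun j => Jint (ν - 1 + (j:ℝ)) f)
end

section
/- Let ν > −1 be real and let f : (0,∞) → ℝ be continuously differentiable. Assume that for every natural number j the functions x ↦ e^{−x} x^{ν} x^j f(x) and x ↦ e^{−x} x^{ν+1} x^j f'(x) are integrable on (0,∞), and that for every natural number j, e^{−x} x^{ν+1} x^j f(x) → 0 as x → 0⁺ and as x → ∞. Then for every n ∈ ℕ, c_n^ν(x f'(x)) = c_n^{ν+1}(f) − (ν+1) c_n^ν(f), where c_n^{ν+1}(f) = ∫_0^∞ e^{−x} x^{ν+1} L_n^{ν+1}(x) f(x) dx. -/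
open Real MeasureTheory Filter Set Finset

lemma lagA_gamma_pos (ν : ℝ) (hν : -1 < ν) (m : ℕ) : 0 < Real.Gamma ((m : ℝ) + ν + 1) := by
  apply Real.Gamma_pos_of_pos
  have : (0:ℝ) ≤ (m:ℝ) := Nat.cast_nonneg m
  linarith

lemma lagA_last (ν : ℝ) (hν : -1 < ν) (n : ℕ) : lagA ν n n = 1 / (n.factorial : ℝ) := by
  have h := (lagA_gamma_pos ν hν n).ne'
  simp only [lagA, Nat.sub_self, Nat.factorial_zero, Nat.cast_one, mul_one]
  rw [div_eq_div_iff (by positivity) (by positivity)]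
  ring

lemma lagA_diff (ν : ℝ) (hν : -1 < ν) {n m : ℕ} (hm : m < n) :
    lagA ν n m - lagA (ν + 1) n m = -((m : ℝ) + 1) * lagA ν n (m + 1) := by
  have ha : (0:ℝ) < (m:ℝ) + ν + 1 := by
    have : (0:ℝ) ≤ (m:ℝ) := Nat.cast_nonneg m; linarith
  have hb : (0:ℝ) < (n:ℝ) + ν + 1 := by
    have : (0:ℝ) ≤ (n:ℝ) := Nat.cast_nonneg n; linarith
  have hΓa := (lagA_gamma_pos ν hν m).ne'
  have h1 : Real.Gamma ((n:ℝ) + (ν+1) + 1) = ((n:ℝ) + ν + 1) * Real.Gamma ((n:ℝ) + ν + 1) := by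
    rw [show (n:ℝ) + (ν+1) + 1 = ((n:ℝ) + ν + 1) + 1 by ring, Real.Gamma_add_one hb.ne']
  have h2 : Real.Gamma ((m:ℝ) + (ν+1) + 1) = ((m:ℝ) + ν + 1) * Real.Gamma ((m:ℝ) + ν + 1) := by
    rw [show (m:ℝ) + (ν+1) + 1 = ((m:ℝ) + ν + 1) + 1 by ring, Real.Gamma_add_one ha.ne']
  have h3 : Real.Gamma ((↑(m+1):ℝ) + ν + 1) = ((m:ℝ) + ν + 1) * Real.Gamma ((m:ℝ) + ν + 1) := by
    push_cast
    rw [show (m:ℝ) + 1 + ν + 1 = ((m:ℝ) + ν + 1) + 1 by ring, Real.Gamma_add_one ha.ne']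
  have h4 : ((n - m).factorial : ℝ) = ((n:ℝ) - (m:ℝ)) * ((n - (m+1)).factorial : ℝ) := by
    have hnm : n - m = (n - (m+1)) + 1 := by omega
    rw [hnm, Nat.factorial_succ]
    push_cast
    have : ((n:ℝ) - ((m:ℝ)+1)) = ((n - (m+1) : ℕ) : ℝ) := by
      rw [Nat.cast_sub (by omega)]; push_cast; ring
    rw [Nat.cast_sub (by omega)]
    push_cast
    ring
  have h5 : (((m+1)).factorial : ℝ) = ((m:ℝ) + 1) * (m.factorial : ℝ) := by
    rw [Nat.factorial_succ]; push_cast; ring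
  have hfm : ((m.factorial : ℕ) : ℝ) ≠ 0 := Nat.cast_ne_zero.mpr m.factorial_ne_zero
  have hfnm : (((n - (m+1)).factorial : ℕ) : ℝ) ≠ 0 := Nat.cast_ne_zero.mpr (n - (m+1)).factorial_ne_zero
  have hnm0 : (n:ℝ) - (m:ℝ) ≠ 0 := by
    have : (m:ℝ) < (n:ℝ) := by exact_mod_cast hm
    linarith
  simp only [lagA, h1, h2, h3, h4, h5]
  field_simp
  ring

lemma lag_sum_identity (ν : ℝ) (hν : -1 < ν) (n : ℕ) (J : ℕ → ℝ) :
    ∑ m ∈ Finset.range (n+1), lagA ν n m * (-1:ℝ)^m * (J (m+1) - (ν+1+(m:ℝ)) * J m)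
    = ∑ m ∈ Finset.range (n+1), lagA (ν+1) n m * (-1:ℝ)^m * J (m+1)
      - (ν+1) * ∑ m ∈ Finset.range (n+1), lagA ν n m * (-1:ℝ)^m * J m := by
  have key : ∑ m ∈ Finset.range (n+1), (lagA ν n m - lagA (ν+1) n m) * ((-1:ℝ)^m * J (m+1))
      = ∑ m ∈ Finset.range (n+1), (m:ℝ) * lagA ν n m * ((-1:ℝ)^m * J m) := by
    rw [Finset.sum_range_succ, Finset.sum_range_succ' (fun m => (m:ℝ) * lagA ν n m * ((-1:ℝ)^m * J m))]
    rw [lagA_last ν hν n, lagA_last (ν+1) (by linarith) n]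
    simp only [sub_self, zero_mul, add_zero, Nat.cast_zero, zero_add]
    apply Finset.sum_congr rfl
    intro m hm
    rw [lagA_diff ν hν (Finset.mem_range.mp hm)]
    push_cast
    ring
  have expand1 : ∑ m ∈ Finset.range (n+1), lagA ν n m * (-1:ℝ)^m * (J (m+1) - (ν+1+(m:ℝ)) * J m)
      = (∑ m ∈ Finset.range (n+1), lagA ν n m * ((-1:ℝ)^m * J (m+1)))
        - (∑ m ∈ Finset.range (n+1), (ν+1) * (lagA ν n m * ((-1:ℝ)^m * J m)))
        - ∑ m ∈ Finset.range (n+1), (m:ℝ) * lagA ν n m * ((-1:ℝ)^m * J m) := by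
    rw [← Finset.sum_sub_distrib, ← Finset.sum_sub_distrib]
    apply Finset.sum_congr rfl
    intro m _
    ring
  have expand2 : ∑ m ∈ Finset.range (n+1), lagA ν n m * ((-1:ℝ)^m * J (m+1))
      - ∑ m ∈ Finset.range (n+1), lagA (ν+1) n m * ((-1:ℝ)^m * J (m+1))
      = ∑ m ∈ Finset.range (n+1), (lagA ν n m - lagA (ν+1) n m) * ((-1:ℝ)^m * J (m+1)) := by
    rw [← Finset.sum_sub_distrib]
    apply Finset.sum_congr rfl
    intro m _
    ring
  have e3 : ∑ m ∈ Finset.range (n+1), lagA (ν+1) n m * (-1:ℝ)^m * J (m+1)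
      = ∑ m ∈ Finset.range (n+1), lagA (ν+1) n m * ((-1:ℝ)^m * J (m+1)) := by
    apply Finset.sum_congr rfl; intro m _; ring
  have e4 : (ν+1) * ∑ m ∈ Finset.range (n+1), lagA ν n m * (-1:ℝ)^m * J m
      = ∑ m ∈ Finset.range (n+1), (ν+1) * (lagA ν n m * ((-1:ℝ)^m * J m)) := by
    rw [Finset.mul_sum]
    apply Finset.sum_congr rfl; intro m _; ring
  rw [expand1, e3, e4]
  linarith [expand2, key]

/-- If `g'` is the derivative of `g` on `(0,∞)`, integrable there, and `g` tends to `0` at both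
ends, then the integral of `g'` over `(0,∞)` vanishes. -/
lemma integral_Ioi_deriv_eq_zero (g g' : ℝ → ℝ)
    (hderiv : ∀ x ∈ Set.Ioi (0:ℝ), HasDerivAt g (g' x) x)
    (hint : IntegrableOn g' (Set.Ioi 0))
    (h0 : Tendsto g (nhdsWithin 0 (Set.Ioi 0)) (nhds 0))
    (htop : Tendsto g atTop (nhds 0)) :
    ∫ x in Set.Ioi (0:ℝ), g' x = 0 := by
  have key : ∀ a : ℝ, 0 < a → ∫ x in Set.Ioi a, g' x = 0 - g a := by
    intro a ha
    apply MeasureTheory.integral_Ioi_of_hasDerivAt_of_tendsto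
    · exact (hderiv a ha).continuousAt.continuousWithinAt
    · intro x hx
      exact hderiv x (lt_trans ha hx)
    · exact hint.mono_set (Set.Ioi_subset_Ioi ha.le)
    · exact htop
  have split : ∀ a : ℝ, 0 < a →
      ∫ x in Set.Ioi (0:ℝ), g' x = (∫ x in Set.Ioc (0:ℝ) a, g' x) + ∫ x in Set.Ioi a, g' x := by
    intro a ha
    rw [← MeasureTheory.setIntegral_union (Set.Ioc_disjoint_Ioi le_rfl) measurableSet_Ioi
      (hint.mono_set Set.Ioc_subset_Ioi_self) (hint.mono_set (Set.Ioi_subset_Ioi ha.le)),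
      Set.Ioc_union_Ioi_eq_Ioi ha.le]
  -- the primitive tends to 0 at 0+
  have hIcc : IntegrableOn g' (Set.Icc (0:ℝ) 1) := by
    rw [integrableOn_Icc_iff_integrableOn_Ioc]
    exact hint.mono_set Set.Ioc_subset_Ioi_self
  have hprim : Tendsto (fun a => ∫ x in Set.Ioc (0:ℝ) a, g' x)
      (nhdsWithin 0 (Set.Ioi 0)) (nhds 0) := by
    have hc := (intervalIntegral.continuousOn_primitive hIcc) 0 (Set.left_mem_Icc.mpr zero_le_one)
    have hc0 : (∫ x in Set.Ioc (0:ℝ) (0:ℝ), g' x) = 0 := by simp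
    have := hc.tendsto
    rw [hc0] at this
    refine this.mono_left ?_
    rw [← nhdsWithin_Ioc_eq_nhdsGT (zero_lt_one (α := ℝ))]
    exact nhdsWithin_mono 0 Set.Ioc_subset_Icc_self
  have tend : Tendsto (fun a => (∫ x in Set.Ioc (0:ℝ) a, g' x) + ∫ x in Set.Ioi a, g' x)
      (nhdsWithin 0 (Set.Ioi 0)) (nhds 0) := by
    have h2 : Tendsto (fun a => ∫ x in Set.Ioi a, g' x) (nhdsWithin 0 (Set.Ioi 0)) (nhds 0) := by
      have : ∀ a ∈ Set.Ioi (0:ℝ), (0:ℝ) - g a = ∫ x in Set.Ioi a, g' x := fun a ha => (key a ha).symm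
      have hg : Tendsto (fun a => (0:ℝ) - g a) (nhdsWithin 0 (Set.Ioi 0)) (nhds 0) := by
        simpa using (tendsto_const_nhds (x := (0:ℝ)) (f := nhdsWithin 0 (Set.Ioi 0))).sub h0
      exact hg.congr' (eventually_nhdsWithin_of_forall this)
    simpa using hprim.add h2
  have const : Tendsto (fun _ : ℝ => ∫ x in Set.Ioi (0:ℝ), g' x)
      (nhdsWithin 0 (Set.Ioi 0)) (nhds (∫ x in Set.Ioi (0:ℝ), g' x)) := tendsto_const_nhds
  have : Tendsto (fun _ : ℝ => ∫ x in Set.Ioi (0:ℝ), g' x) (nhdsWithin 0 (Set.Ioi 0)) (nhds 0) := by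
    refine tend.congr' (eventually_nhdsWithin_of_forall ?_)
    intro a ha
    exact (split a ha).symm
  exact tendsto_nhds_unique const this

/-- Expansion of a Laguerre coefficient into monomial integrals. -/
lemma lagC_expand (ν : ℝ) (n : ℕ) (g : ℝ → ℝ)
    (hint : ∀ m : ℕ, IntegrableOn (fun x : ℝ => Real.exp (-x) * x ^ ν * x ^ m * g x) (Set.Ioi 0)) :
    lagC ν n g = ∑ m ∈ Finset.range (n+1),
      lagA ν n m * (-1:ℝ)^m * ∫ x in Set.Ioi (0:ℝ), Real.exp (-x) * x ^ ν * x ^ m * g x := by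
  unfold lagC
  have heq : (fun x : ℝ => Real.exp (-x) * x ^ ν * lagP ν n x * g x)
      = fun x : ℝ => ∑ m ∈ Finset.range (n+1),
        lagA ν n m * (-1:ℝ)^m * (Real.exp (-x) * x ^ ν * x ^ m * g x) := by
    funext x
    simp only [lagP, lagA, Finset.sum_mul, Finset.mul_sum]
    apply Finset.sum_congr rfl
    intro m _
    rw [neg_pow]
    ring
  rw [heq, MeasureTheory.integral_finset_sum]
  · apply Finset.sum_congr rfl
    intro m _
    exact MeasureTheory.integral_const_mul _ _
  · intro m _
    exact (hint m).const_mul _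

theorem laguerre_transform_x_mul_deriv_order_shift
    (ν : ℝ) (hν : -1 < ν) (f f' : ℝ → ℝ)
    (hderiv : ∀ x ∈ Set.Ioi (0 : ℝ), HasDerivAt f (f' x) x)
    (hcont : ContinuousOn f' (Set.Ioi 0))
    (hint_f : ∀ j : ℕ,
      IntegrableOn (fun x : ℝ => Real.exp (-x) * x ^ ν * x ^ j * f x) (Set.Ioi 0))
    (hint_f' : ∀ j : ℕ,
      IntegrableOn (fun x : ℝ => Real.exp (-x) * x ^ (ν + 1) * x ^ j * f' x) (Set.Ioi 0))
    (hlim_zero : ∀ j : ℕ,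
      Tendsto (fun x : ℝ => Real.exp (-x) * x ^ (ν + 1) * x ^ j * f x)
        (nhdsWithin 0 (Set.Ioi 0)) (nhds 0))
    (hlim_top : ∀ j : ℕ,
      Tendsto (fun x : ℝ => Real.exp (-x) * x ^ (ν + 1) * x ^ j * f x) atTop (nhds 0)) :
    ∀ n : ℕ, lagC ν n (fun x => x * f' x) =
      lagC (ν + 1) n f - (ν + 1) * lagC ν n f := by
  intro n
  set J : ℕ → ℝ := fun m => ∫ x in Set.Ioi (0:ℝ), Real.exp (-x) * x ^ ν * x ^ m * f x with hJ
  -- integration by parts for each monomial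
  have ibp : ∀ m : ℕ, (∫ x in Set.Ioi (0:ℝ), Real.exp (-x) * x ^ (ν+1) * x ^ m * f' x)
      = J (m+1) - (ν+1+(m:ℝ)) * J m := by
    intro m
    set G : ℝ → ℝ := fun x => Real.exp (-x) * x ^ (ν+1) * x ^ m * f' x
      - Real.exp (-x) * x ^ ν * x ^ (m+1) * f x
      + (ν+1+(m:ℝ)) * (Real.exp (-x) * x ^ ν * x ^ m * f x) with hG
    have hGint : IntegrableOn G (Set.Ioi 0) :=
      ((hint_f' m).sub (hint_f (m+1))).add ((hint_f m).const_mul _)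
    have hg : ∀ x ∈ Set.Ioi (0:ℝ),
        HasDerivAt (fun x : ℝ => Real.exp (-x) * x ^ (ν+1) * x ^ m * f x) (G x) x := by
      intro x hx
      have hx0 : (0:ℝ) < x := hx
      set p : ℝ := ν + 1 + (m:ℝ) with hp
      have h1 : HasDerivAt (fun x : ℝ => Real.exp (-x)) (-Real.exp (-x)) x := by
        simpa [Function.comp_def] using (Real.hasDerivAt_exp (-x)).comp x (hasDerivAt_neg x)
      have h2 : HasDerivAt (fun x : ℝ => x ^ p) (p * x ^ (ν + (m:ℝ))) x := by
        have := Real.hasDerivAt_rpow_const (x := x) (p := p) (Or.inl hx0.ne')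
        convert this using 2
        rw [hp]; ring
      have h3 : HasDerivAt (fun x : ℝ => Real.exp (-x) * x ^ p)
          (-Real.exp (-x) * x ^ p + Real.exp (-x) * (p * x ^ (ν + (m:ℝ)))) x := h1.mul h2
      have h4 : HasDerivAt (fun x : ℝ => Real.exp (-x) * x ^ p * f x)
          ((-Real.exp (-x) * x ^ p + Real.exp (-x) * (p * x ^ (ν + (m:ℝ)))) * f x
            + Real.exp (-x) * x ^ p * f' x) x := h3.mul (hderiv x hx)
      have heqev : (fun x : ℝ => Real.exp (-x) * x ^ (ν+1) * x ^ m * f x)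
          =ᶠ[nhds x] fun x : ℝ => Real.exp (-x) * x ^ p * f x := by
        filter_upwards [isOpen_Ioi.mem_nhds hx] with y hy
        have hy0 : (0:ℝ) < y := hy
        have hyp : y ^ p = y ^ (ν+1) * y ^ m := by
          rw [hp, Real.rpow_add hy0, Real.rpow_natCast]
        rw [hyp]
        ring
      have h5 : HasDerivAt (fun x : ℝ => Real.exp (-x) * x ^ (ν+1) * x ^ m * f x)
          ((-Real.exp (-x) * x ^ p + Real.exp (-x) * (p * x ^ (ν + (m:ℝ)))) * f x
            + Real.exp (-x) * x ^ p * f' x) x := h4.congr_of_eventuallyEq heqev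
      convert h5 using 1
      rw [hG, hp]
      simp only
      have e1 : x ^ (ν + 1 + (m:ℝ)) = x ^ (ν+1) * x ^ m := by
        rw [Real.rpow_add hx0, Real.rpow_natCast]
      have e2 : x ^ (ν + (m:ℝ)) = x ^ ν * x ^ m := by
        rw [Real.rpow_add hx0, Real.rpow_natCast]
      have e3 : x ^ (ν + 1) = x ^ ν * x := Real.rpow_add_one hx0.ne' ν
      rw [e1, e2, e3, pow_succ]
      ring
    have hzero : ∫ x in Set.Ioi (0:ℝ), G x = 0 :=
      integral_Ioi_deriv_eq_zero _ _ hg hGint (hlim_zero m) (hlim_top m)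
    have hsplit : ∫ x in Set.Ioi (0:ℝ), G x
        = (∫ x in Set.Ioi (0:ℝ), Real.exp (-x) * x ^ (ν+1) * x ^ m * f' x)
          - (∫ x in Set.Ioi (0:ℝ), Real.exp (-x) * x ^ ν * x ^ (m+1) * f x)
          + (ν+1+(m:ℝ)) * ∫ x in Set.Ioi (0:ℝ), Real.exp (-x) * x ^ ν * x ^ m * f x := by
      calc ∫ x in Set.Ioi (0:ℝ), G x
          = (∫ x in Set.Ioi (0:ℝ), (Real.exp (-x) * x ^ (ν+1) * x ^ m * f' x
              - Real.exp (-x) * x ^ ν * x ^ (m+1) * f x))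
            + ∫ x in Set.Ioi (0:ℝ), (ν+1+(m:ℝ)) * (Real.exp (-x) * x ^ ν * x ^ m * f x) :=
          MeasureTheory.integral_add ((hint_f' m).sub (hint_f (m+1))) ((hint_f m).const_mul _)
        _ = (∫ x in Set.Ioi (0:ℝ), Real.exp (-x) * x ^ (ν+1) * x ^ m * f' x)
              - (∫ x in Set.Ioi (0:ℝ), Real.exp (-x) * x ^ ν * x ^ (m+1) * f x)
              + (ν+1+(m:ℝ)) * ∫ x in Set.Ioi (0:ℝ), Real.exp (-x) * x ^ ν * x ^ m * f x := by
          rw [MeasureTheory.integral_sub (hint_f' m) (hint_f (m+1)),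
            MeasureTheory.integral_const_mul]
    rw [hsplit] at hzero
    simp only [hJ]
    linarith
  -- expansions of the three Laguerre coefficients
  have hintg : ∀ m : ℕ,
      IntegrableOn (fun x : ℝ => Real.exp (-x) * x ^ ν * x ^ m * (x * f' x)) (Set.Ioi 0) := by
    intro m
    refine (hint_f' m).congr_fun ?_ measurableSet_Ioi
    intro x hx
    have hx0 : (0:ℝ) < x := hx
    simp only
    rw [Real.rpow_add_one hx0.ne' ν]
    ring
  have hint2 : ∀ m : ℕ,
      IntegrableOn (fun x : ℝ => Real.exp (-x) * x ^ (ν+1) * x ^ m * f x) (Set.Ioi 0) := by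
    intro m
    refine (hint_f (m+1)).congr_fun ?_ measurableSet_Ioi
    intro x hx
    have hx0 : (0:ℝ) < x := hx
    simp only
    rw [Real.rpow_add_one hx0.ne' ν, pow_succ]
    ring
  have e1 : lagC ν n (fun x => x * f' x)
      = ∑ m ∈ Finset.range (n+1), lagA ν n m * (-1:ℝ)^m * (J (m+1) - (ν+1+(m:ℝ)) * J m) := by
    rw [lagC_expand ν n _ hintg]
    apply Finset.sum_congr rfl
    intro m _
    congr 1
    rw [← ibp m]
    apply MeasureTheory.setIntegral_congr_fun measurableSet_Ioi
    intro x hx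
    have hx0 : (0:ℝ) < x := hx
    simp only
    rw [Real.rpow_add_one hx0.ne' ν]
    ring
  have e2 : lagC (ν+1) n f
      = ∑ m ∈ Finset.range (n+1), lagA (ν+1) n m * (-1:ℝ)^m * J (m+1) := by
    rw [lagC_expand (ν+1) n f hint2]
    apply Finset.sum_congr rfl
    intro m _
    congr 1
    apply MeasureTheory.setIntegral_congr_fun measurableSet_Ioi
    intro x hx
    have hx0 : (0:ℝ) < x := hx
    simp only
    rw [Real.rpow_add_one hx0.ne' ν, pow_succ]
    ring
  have e3 : lagC ν n f = ∑ m ∈ Finset.range (n+1), lagA ν n m * (-1:ℝ)^m * J m :=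
    lagC_expand ν n f hint_f
  rw [e1, e2, e3]
  exact lag_sum_identity ν hν n J
end

section
/- Let R > 0 be real, let m ∈ ℕ, set λ_m = m(m+2R+1), and define y_m : ℝ → ℝ by y_m(x) = −Σ_{k=0}^{m−1} L_k(x) + (R+m)·L_m(x). Then for every x > 0, (d²/dx²)(x² e^{−x} y_m''(x)) − (d/dx)(((2R+2)x + 2) e^{−x} y_m'(x)) = e^{−x} λ_m y_m(x); moreover y_m(0) = R and y_m'(0) = −λ_m/2. -/
open Real MeasureTheory Filter Set Finset

/-- Laguerre polynomial (order zero) of degree `n`. -/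
noncomputable def lag0 (n : ℕ) (x : ℝ) : ℝ :=
  ∑ k ∈ Finset.range (n + 1),
    (-1 : ℝ) ^ k * (n.factorial : ℝ) / (((n - k).factorial : ℝ) * ((k.factorial : ℝ)) ^ 2) * x ^ k


section LagAux
open Polynomial

noncomputable def Lag (n : ℕ) : Polynomial ℝ :=
  ∑ k ∈ Finset.range (n + 1),
    Polynomial.C ((-1 : ℝ) ^ k * (n.factorial : ℝ) /
      (((n - k).factorial : ℝ) * ((k.factorial : ℝ)) ^ 2)) * Polynomial.X ^ k

lemma Lag_eval (n : ℕ) (x : ℝ) : (Lag n).eval x = lag0 n x := by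
  simp [Lag, lag0, Polynomial.eval_finset_sum]

lemma Lag_coeff (n k : ℕ) :
    (Lag n).coeff k = (-1 : ℝ) ^ k * (n.choose k : ℝ) / (k.factorial : ℝ) := by
  rw [Lag, Polynomial.finset_sum_coeff]
  simp only [Polynomial.coeff_C_mul, Polynomial.coeff_X_pow]
  by_cases h : k ≤ n
  · rw [Finset.sum_eq_single k]
    · have hc' : (n.choose k : ℝ) * (k.factorial : ℝ) * ((n - k).factorial : ℝ) = n.factorial := by
        exact_mod_cast Nat.choose_mul_factorial_mul_factorial h
      have h1 : ((n - k).factorial : ℝ) ≠ 0 := Nat.cast_ne_zero.2 (Nat.factorial_ne_zero _)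
      have h2 : ((k).factorial : ℝ) ≠ 0 := Nat.cast_ne_zero.2 (Nat.factorial_ne_zero _)
      rw [if_pos rfl, ← hc']
      field_simp
    · intro b hb hbk
      rw [if_neg (by omega)]
      ring
    · intro hk
      exact absurd (Finset.mem_range.2 (by omega)) hk
  · rw [Nat.choose_eq_zero_of_lt (by omega)]
    rw [Finset.sum_eq_zero]
    · simp
    · intro b hb
      rw [Finset.mem_range] at hb
      rw [if_neg (by omega)]
      ring

lemma hockey (n k : ℕ) : ∑ j ∈ Finset.range n, (j.choose k) = n.choose (k + 1) := by
  induction n with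
  | zero => simp
  | succ n ih => rw [Finset.sum_range_succ, ih, Nat.choose_succ_succ' n k]; omega

-- real-cast choose step: (k+1)*C(n,k+1) = (n-k)*C(n,k)
lemma chooseR (n k : ℕ) :
    ((k : ℝ) + 1) * (n.choose (k + 1) : ℝ) = ((n : ℝ) - k) * (n.choose k : ℝ) := by
  by_cases h : k ≤ n
  · have := Nat.choose_succ_right_eq n k
    have hcast : (n.choose (k+1) : ℝ) * (k + 1) = (n.choose k : ℝ) * ((n : ℝ) - k) := by
      rw [show ((n:ℝ) - k) = ((n - k : ℕ) : ℝ) by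
        rw [Nat.cast_sub h]]
      exact_mod_cast this
    linarith [hcast]
  · rcases Nat.lt_or_ge n k with h' | h'
    · rw [Nat.choose_eq_zero_of_lt (by omega), Nat.choose_eq_zero_of_lt (by omega)]
      ring
    · omega

lemma Lag_deriv (n : ℕ) :
    derivative (Lag n) = -∑ k ∈ Finset.range n, Lag k := by
  ext k
  rw [Polynomial.coeff_derivative, Lag_coeff]
  rw [Polynomial.coeff_neg, Polynomial.finset_sum_coeff]
  simp only [Lag_coeff]
  have hs : ∑ j ∈ Finset.range n, ((-1:ℝ)^k * (j.choose k : ℝ) / (k.factorial : ℝ))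
      = (-1:ℝ)^k * ((n.choose (k+1) : ℝ)) / (k.factorial : ℝ) := by
    rw [← Finset.sum_div, ← Finset.mul_sum]
    congr 2
    exact_mod_cast hockey n k
  rw [hs]
  have h2 : ((k+1).factorial : ℝ) = (k.factorial : ℝ) * ((k:ℝ) + 1) := by
    rw [Nat.factorial_succ]; push_cast; ring
  have h3 : (k.factorial : ℝ) ≠ 0 := Nat.cast_ne_zero.2 (Nat.factorial_ne_zero _)
  have h4 : ((k:ℝ) + 1) ≠ 0 := by positivity
  rw [h2, pow_succ]
  field_simp

-- one-step coefficient relation: (k+1)^2 * d_{k+1} = (k - n) * d_k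
lemma Dstep (n k : ℕ) :
    ((k:ℝ)+1)^2 * ((Lag n).coeff (k+1)) = ((k:ℝ) - n) * ((Lag n).coeff k) := by
  rw [Lag_coeff, Lag_coeff]
  have h2 : ((k+1).factorial : ℝ) = (k.factorial : ℝ) * ((k:ℝ) + 1) := by
    rw [Nat.factorial_succ]; push_cast; ring
  have h3 : (k.factorial : ℝ) ≠ 0 := Nat.cast_ne_zero.2 (Nat.factorial_ne_zero _)
  have h4 : ((k:ℝ) + 1) ≠ 0 := by positivity
  have hc := chooseR n k
  rw [h2]
  field_simp
  simp only [pow_succ]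
  linear_combination (-((-1:ℝ)^k)) * hc

lemma Lag_ode (n : ℕ) :
    Polynomial.X * derivative (derivative (Lag n)) =
      (Polynomial.X - 1) * derivative (Lag n) - Polynomial.C (n : ℝ) * Lag n := by
  ext k
  rcases k with _ | k
  · simp only [Polynomial.mul_coeff_zero, Polynomial.coeff_X_zero, zero_mul,
      Polynomial.coeff_sub, Polynomial.coeff_C_mul, Polynomial.coeff_derivative,
      Polynomial.coeff_add, Polynomial.coeff_neg, Polynomial.coeff_one,
      Lag_coeff]
    simp [Nat.choose_one_right]
  · have hstep := Dstep n (k+1)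
    push_cast at hstep
    rw [sub_mul, one_mul]
    simp only [Polynomial.coeff_X_mul, Polynomial.coeff_sub, Polynomial.coeff_derivative,
      Polynomial.coeff_C_mul]
    push_cast
    linear_combination hstep

lemma pexp_deriv (p : Polynomial ℝ) :
    deriv (fun t : ℝ => p.eval t * Real.exp (-t)) =
      fun x => (derivative p - p).eval x * Real.exp (-x) := by
  funext x
  have h1 : HasDerivAt (fun t : ℝ => p.eval t) (p.derivative.eval x) x := p.hasDerivAt x
  have h2 : HasDerivAt (fun t : ℝ => Real.exp (-t)) (-Real.exp (-x)) x := by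
    simpa using (hasDerivAt_neg x).exp
  rw [show deriv (fun t : ℝ => p.eval t * Real.exp (-t)) x = _ from (h1.mul h2).deriv, Polynomial.eval_sub]
  ring


lemma choose_two (m : ℕ) : ((m.choose 2 : ℕ) : ℝ) * 2 = (m:ℝ) * ((m:ℝ) - 1) := by
  induction m with
  | zero => simp
  | succ m ih =>
    rw [Nat.choose_succ_succ, Nat.choose_one_right]
    push_cast
    push_cast at ih
    nlinarith [ih]


end LagAux

open Polynomial in
theorem fourth_order_laguerre_type_eigenfunctions
    (R : ℝ) (hR : 0 < R) (m : ℕ) :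
    let lam : ℝ := m * (m + 2 * R + 1)
    let y : ℝ → ℝ := fun x => -(∑ k ∈ Finset.range m, lag0 k x) + (R + m) * lag0 m x
    (∀ x : ℝ, 0 < x →
      deriv (deriv (fun t : ℝ => t ^ 2 * Real.exp (-t) * deriv (deriv y) t)) x -
        deriv (fun t : ℝ => ((2 * R + 2) * t + 2) * Real.exp (-t) * deriv y t) x =
      Real.exp (-x) * lam * y x) ∧
    y 0 = R ∧ deriv y 0 = -lam / 2 := by
  intro lam y
  have hlam : lam = (m:ℝ) * ((m:ℝ) + 2 * R + 1) := rfl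
  have hy : y = fun x => (((derivative (Lag m)) + (Polynomial.C R + Polynomial.C (m:ℝ)) * (Lag m))).eval x := by
    funext x
    show -(∑ k ∈ Finset.range m, lag0 k x) + (R + m) * lag0 m x = _
    rw [Lag_deriv m]
    simp [Polynomial.eval_finset_sum, Lag_eval]
    try ring
  have hy1 : deriv y = fun x => (derivative ((derivative (Lag m)) + (Polynomial.C R + Polynomial.C (m:ℝ)) * (Lag m))).eval x := by
    rw [hy]; funext x; apply Polynomial.deriv
  have hy2 : deriv (deriv y) = fun x => (derivative (derivative ((derivative (Lag m)) + (Polynomial.C R + Polynomial.C (m:ℝ)) * (Lag m)))).eval x := by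
    rw [hy1]; funext x; apply Polynomial.deriv
  -- derivative computations for Y
  have hd1 : derivative ((derivative (Lag m)) + (Polynomial.C R + Polynomial.C (m:ℝ)) * (Lag m)) = (derivative (derivative (Lag m))) + (Polynomial.C R + Polynomial.C (m:ℝ)) * (derivative (Lag m)) := by
    simp [derivative_add, derivative_mul]
  have hd2 : derivative ((derivative (derivative (Lag m))) + (Polynomial.C R + Polynomial.C (m:ℝ)) * (derivative (Lag m))) = (derivative (derivative (derivative (Lag m)))) + (Polynomial.C R + Polynomial.C (m:ℝ)) * (derivative (derivative (Lag m))) := by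
    simp [derivative_add, derivative_mul]
  have hd3 : derivative ((derivative (derivative (derivative (Lag m)))) + (Polynomial.C R + Polynomial.C (m:ℝ)) * (derivative (derivative (Lag m)))) = (derivative (derivative (derivative (derivative (Lag m))))) + (Polynomial.C R + Polynomial.C (m:ℝ)) * (derivative (derivative (derivative (Lag m)))) := by
    simp [derivative_add, derivative_mul]
  have hd4 : derivative ((derivative (derivative (derivative (derivative (Lag m))))) + (Polynomial.C R + Polynomial.C (m:ℝ)) * (derivative (derivative (derivative (Lag m))))) = (derivative (derivative (derivative (derivative (derivative (Lag m)))))) + (Polynomial.C R + Polynomial.C (m:ℝ)) * (derivative (derivative (derivative (derivative (Lag m))))) := by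
    simp [derivative_add, derivative_mul]
  -- ODE chain
  have e1 : (Polynomial.X : Polynomial ℝ) * (derivative (derivative (Lag m))) = ((Polynomial.X : Polynomial ℝ) - 1) * (derivative (Lag m)) - Polynomial.C (m:ℝ) * (Lag m) := Lag_ode m
  have e2 : (Polynomial.X : Polynomial ℝ) * (derivative (derivative (derivative (Lag m)))) = ((Polynomial.X : Polynomial ℝ) - 2) * (derivative (derivative (Lag m))) - (Polynomial.C (m:ℝ) - 1) * (derivative (Lag m)) := by
    have h := congrArg derivative e1
    simp only [derivative_mul, derivative_X, derivative_sub, derivative_one,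
      derivative_C, Polynomial.derivative_ofNat] at h
    linear_combination h
  have e3 : (Polynomial.X : Polynomial ℝ) * (derivative (derivative (derivative (derivative (Lag m))))) = ((Polynomial.X : Polynomial ℝ) - 3) * (derivative (derivative (derivative (Lag m)))) - (Polynomial.C (m:ℝ) - 2) * (derivative (derivative (Lag m))) := by
    have h := congrArg derivative e2
    simp only [derivative_mul, derivative_X, derivative_sub, derivative_one,
      derivative_C, Polynomial.derivative_ofNat] at h
    linear_combination h
  have e4 : (Polynomial.X : Polynomial ℝ) * (derivative (derivative (derivative (derivative (derivative (Lag m)))))) = ((Polynomial.X : Polynomial ℝ) - 4) * (derivative (derivative (derivative (derivative (Lag m))))) - (Polynomial.C (m:ℝ) - 3) * (derivative (derivative (derivative (Lag m)))) := by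
    have h := congrArg derivative e3
    simp only [derivative_mul, derivative_X, derivative_sub, derivative_one,
      derivative_C, Polynomial.derivative_ofNat] at h
    linear_combination h
  -- key polynomial identity
  have key : (Polynomial.X : Polynomial ℝ)^2 * ((derivative (derivative (derivative (derivative (derivative (Lag m)))))) + (Polynomial.C R + Polynomial.C (m:ℝ)) * (derivative (derivative (derivative (derivative (Lag m)))))) + (4*(Polynomial.X : Polynomial ℝ) - 2*(Polynomial.X : Polynomial ℝ)^2) * ((derivative (derivative (derivative (derivative (Lag m))))) + (Polynomial.C R + Polynomial.C (m:ℝ)) * (derivative (derivative (derivative (Lag m)))))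
      + ((Polynomial.X : Polynomial ℝ)^2 - (2*Polynomial.C R + 6)*(Polynomial.X : Polynomial ℝ)) * ((derivative (derivative (derivative (Lag m)))) + (Polynomial.C R + Polynomial.C (m:ℝ)) * (derivative (derivative (Lag m))))
      + ((2*Polynomial.C R + 2)*(Polynomial.X : Polynomial ℝ) - 2*Polynomial.C R) * ((derivative (derivative (Lag m))) + (Polynomial.C R + Polynomial.C (m:ℝ)) * (derivative (Lag m)))
      = (Polynomial.C (m:ℝ) * (Polynomial.C (m:ℝ) + 2*Polynomial.C R + 1)) * ((derivative (Lag m)) + (Polynomial.C R + Polynomial.C (m:ℝ)) * (Lag m)) := by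
    linear_combination (Polynomial.X : Polynomial ℝ) * e4 + ((Polynomial.C R + Polynomial.C (m:ℝ)) - 1) * (Polynomial.X : Polynomial ℝ) * e3 + (-((Polynomial.C R + Polynomial.C (m:ℝ))*(Polynomial.X : Polynomial ℝ)) - Polynomial.C R) * e2
      + (-((Polynomial.C R + Polynomial.C (m:ℝ)) * (2*Polynomial.C R + Polynomial.C (m:ℝ) + 1))) * e1
  refine ⟨?_, ?_, ?_⟩
  · intro x hx
    have hq : (fun t : ℝ => t ^ 2 * Real.exp (-t) * deriv (deriv y) t)
        = fun t => (((Polynomial.X : Polynomial ℝ)^2 * (derivative (derivative ((derivative (Lag m)) + (Polynomial.C R + Polynomial.C (m:ℝ)) * (Lag m))))).eval t) * Real.exp (-t) := by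
      funext t
      rw [hy2]
      simp
      ring
    have hr : (fun t : ℝ => ((2 * R + 2) * t + 2) * Real.exp (-t) * deriv y t)
        = fun t => ((((2*Polynomial.C R + 2)*(Polynomial.X : Polynomial ℝ) + 2) * (derivative ((derivative (Lag m)) + (Polynomial.C R + Polynomial.C (m:ℝ)) * (Lag m)))).eval t) * Real.exp (-t) := by
      funext t
      rw [hy1]
      simp
      ring
    rw [hq, pexp_deriv, pexp_deriv, hr, pexp_deriv, hy]
    set q := (Polynomial.X : Polynomial ℝ)^2 * (derivative (derivative ((derivative (Lag m)) + (Polynomial.C R + Polynomial.C (m:ℝ)) * (Lag m)))) with hqdef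
    set r := ((2*Polynomial.C R + 2)*(Polynomial.X : Polynomial ℝ) + 2) * (derivative ((derivative (Lag m)) + (Polynomial.C R + Polynomial.C (m:ℝ)) * (Lag m))) with hrdef
    have hpoly : (derivative (derivative q - q) - (derivative q - q)) - (derivative r - r)
        = (Polynomial.C (m:ℝ) * (Polynomial.C (m:ℝ) + 2*Polynomial.C R + 1)) * ((derivative (Lag m)) + (Polynomial.C R + Polynomial.C (m:ℝ)) * (Lag m)) := by
      rw [← key]
      rw [hqdef, hrdef]
      simp only [hd1, hd2, hd3, hd4, derivative_sub, derivative_mul, derivative_add,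
        derivative_pow, derivative_X, derivative_C, derivative_one,
        Polynomial.derivative_ofNat, Nat.cast_ofNat, map_ofNat, map_one, Nat.cast_one,
        Polynomial.C_1]
      norm_num
      ring
    calc (derivative (derivative q - q) - (derivative q - q)).eval x * Real.exp (-x)
          - (derivative r - r).eval x * Real.exp (-x)
        = ((derivative (derivative q - q) - (derivative q - q)) - (derivative r - r)).eval x
            * Real.exp (-x) := by simp [Polynomial.eval_sub]; ring
      _ = Real.exp (-x) * lam * (((derivative (Lag m)) + (Polynomial.C R + Polynomial.C (m:ℝ)) * (Lag m))).eval x := by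
          rw [hpoly, hlam]; simp [Polynomial.eval_mul, Polynomial.eval_add]; ring
  · rw [hy]
    simp only []
    rw [← Polynomial.coeff_zero_eq_eval_zero]
    simp only [Polynomial.coeff_add, Polynomial.mul_coeff_zero, Polynomial.coeff_derivative,
      Lag_coeff, Polynomial.coeff_C, Nat.choose_one_right, Nat.choose_zero_right]
    simp
  · rw [hy1]
    simp only []
    rw [← Polynomial.coeff_zero_eq_eval_zero]
    have hc2 := choose_two m
    rw [Polynomial.coeff_derivative]
    simp only [add_mul, Polynomial.coeff_add, Polynomial.coeff_C_mul,
      Polynomial.coeff_derivative, Lag_coeff, Nat.choose_one_right, hlam]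
    push_cast
    simp [Nat.factorial]
    push_cast at hc2
    nlinarith [hc2]
end

section
/- Let R > 0 be real and m ∈ ℕ. Define y_m(x) = −Σ_{k=0}^{m−1} L_k(x) + (R+m)·L_m(x) and R_m(x) = Σ_{k=0}^{m} [(−1)^k / (k+1)!] · C(m,k) · (k(R+m+1) + R) · x^k, where C(m,k) is the binomial coefficient. Then y_m(x) = R_m(x) for every real x. -/
open Real MeasureTheory Filter Set Finset

lemma lag0_eq (n m : ℕ) (hnm : n ≤ m) (x : ℝ) :
    lag0 n x = ∑ k ∈ Finset.range (m + 1),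
      (n.choose k : ℝ) * ((-1 : ℝ) ^ k / (k.factorial : ℝ) * x ^ k) := by
  unfold lag0
  rw [← Finset.sum_subset (Finset.range_subset_range.2 (by omega) :
      Finset.range (n+1) ⊆ Finset.range (m+1))]
  · refine Finset.sum_congr rfl fun k hk => ?_
    simp only [Finset.mem_range] at hk
    have hkn : k ≤ n := by omega
    rw [Nat.cast_choose ℝ hkn]
    have h1 : ((n-k).factorial : ℝ) ≠ 0 := Nat.cast_ne_zero.2 (Nat.factorial_ne_zero _)
    have h2 : (k.factorial : ℝ) ≠ 0 := Nat.cast_ne_zero.2 (Nat.factorial_ne_zero _)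
    field_simp
  · intro k hk hk2
    simp only [Finset.mem_range] at hk hk2
    rw [Nat.choose_eq_zero_of_lt (by omega)]
    simp

lemma sum_choose_hockey (m k : ℕ) : ∑ n ∈ Finset.range m, n.choose k = m.choose (k+1) := by
  induction m with
  | zero => simp
  | succ m ih => rw [Finset.sum_range_succ, ih, Nat.choose_succ_succ, Nat.add_comm]

theorem eigenfunctions_eq_krall_solutions
    (R : ℝ) (hR : 0 < R) (m : ℕ) (x : ℝ) :
    -(∑ k ∈ Finset.range m, lag0 k x) + (R + m) * lag0 m x =
      ∑ k ∈ Finset.range (m + 1),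
        (-1 : ℝ) ^ k / ((k + 1).factorial : ℝ) * (m.choose k : ℝ) *
          ((k : ℝ) * (R + m + 1) + R) * x ^ k := by
  have hrw : ∀ n ∈ Finset.range m, lag0 n x = ∑ k ∈ Finset.range (m + 1),
      (n.choose k : ℝ) * ((-1 : ℝ) ^ k / (k.factorial : ℝ) * x ^ k) := by
    intro n hn
    exact lag0_eq n m (by simp at hn; omega) x
  rw [Finset.sum_congr rfl hrw, lag0_eq m m le_rfl x, Finset.sum_comm, Finset.mul_sum,
    ← Finset.sum_neg_distrib, ← Finset.sum_add_distrib]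
  refine Finset.sum_congr rfl fun k hk => ?_
  simp only [Finset.mem_range] at hk
  have hkm : k ≤ m := by omega
  rw [← Finset.sum_mul, ← Nat.cast_sum, sum_choose_hockey]
  push_cast
  have hc : ((m.choose (k+1) : ℝ)) * (k+1) = (m.choose k : ℝ) * ((m : ℝ) - k) := by
    have := Nat.choose_succ_right_eq m k
    have h2 : ((m.choose (k+1) * (k+1) : ℕ) : ℝ) = ((m.choose k * (m - k) : ℕ) : ℝ) := by
      exact_mod_cast congrArg (Nat.cast : ℕ → ℝ) this
    push_cast [Nat.cast_sub hkm] at h2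
    linarith
  have hfac : ((k+1).factorial : ℝ) = (k+1) * k.factorial := by
    push_cast [Nat.factorial_succ]; ring
  have h2 : (k.factorial : ℝ) ≠ 0 := Nat.cast_ne_zero.2 (Nat.factorial_ne_zero _)
  have h3 : (k : ℝ) + 1 ≠ 0 := by positivity
  rw [hfac]
  field_simp
  linear_combination (-(x^k)) * hc
end

section
/- For every n ∈ ℕ and every real x, L_{n+1}(x) − L_n(x) = Σ_{k=1}^{n+1} (−1)^k · n! / (k! · (k−1)! · (n+1−k)!) · x^k. -/
open Real MeasureTheory Filter Set Finset

lemma lag_coeff_sub (n k : ℕ) (hk1 : 1 ≤ k) (hk : k ≤ n) (x : ℝ) :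
    (-1 : ℝ) ^ k * ((n+1).factorial : ℝ) / ((((n+1) - k).factorial : ℝ) * ((k.factorial : ℝ)) ^ 2) * x ^ k
      - (-1 : ℝ) ^ k * (n.factorial : ℝ) / (((n - k).factorial : ℝ) * ((k.factorial : ℝ)) ^ 2) * x ^ k
    = (-1 : ℝ) ^ k * (n.factorial : ℝ) /
        ((k.factorial : ℝ) * ((k - 1).factorial : ℝ) * ((n + 1 - k).factorial : ℝ)) * x ^ k := by
  obtain ⟨j, rfl⟩ := Nat.exists_eq_add_of_le hk1
  have h2 : (n + 1 - (1 + j)).factorial = (n - j) * (n - (1 + j)).factorial := by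
    have h : n + 1 - (1 + j) = (n - (1 + j)) + 1 := by omega
    rw [h, Nat.factorial_succ]
    congr 1
    omega
  have h3 : (1 + j).factorial = (1 + j) * j.factorial := by
    rw [Nat.add_comm 1 j, Nat.factorial_succ]
  have h4 : (1 + j) - 1 = j := by omega
  have h1 : (n + 1).factorial = (n + 1) * n.factorial := Nat.factorial_succ n
  rw [h1, h2, h3, h4]
  have hnj : ((n - (1 + j) : ℕ) : ℝ) = (n : ℝ) - 1 - j := by
    push_cast [Nat.cast_sub hk]; ring
  have hnj2 : ((n - j : ℕ) : ℝ) = (n : ℝ) - j := by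
    push_cast [Nat.cast_sub (by omega : j ≤ n)]; ring
  have e1 : ((n - (1 + j)).factorial : ℝ) ≠ 0 := Nat.cast_ne_zero.2 (Nat.factorial_ne_zero _)
  have e2 : (j.factorial : ℝ) ≠ 0 := Nat.cast_ne_zero.2 (Nat.factorial_ne_zero _)
  have e3 : ((n : ℝ) - j) ≠ 0 := by
    have : (j : ℝ) < n := by exact_mod_cast (by omega : j < n)
    linarith
  have e4 : ((1 : ℝ) + j) ≠ 0 := by positivity
  push_cast [hnj, hnj2]
  field_simp
  ring
  
theorem laguerre_succ_sub
    (n : ℕ) (x : ℝ) :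
    lag0 (n + 1) x - lag0 n x =
      ∑ k ∈ Finset.Icc 1 (n + 1),
        (-1 : ℝ) ^ k * (n.factorial : ℝ) /
          ((k.factorial : ℝ) * ((k - 1).factorial : ℝ) * ((n + 1 - k).factorial : ℝ)) * x ^ k := by
  unfold lag0
  have hR : ∑ k ∈ Finset.Icc 1 (n + 1),
      (-1 : ℝ) ^ k * (n.factorial : ℝ) /
        ((k.factorial : ℝ) * ((k - 1).factorial : ℝ) * ((n + 1 - k).factorial : ℝ)) * x ^ k
      = ∑ i ∈ Finset.range (n + 1),
      (-1 : ℝ) ^ (i+1) * (n.factorial : ℝ) /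
        (((i+1).factorial : ℝ) * ((i).factorial : ℝ) * ((n - i).factorial : ℝ)) * x ^ (i+1) := by
    rw [show Finset.Icc 1 (n+1) = Finset.Icc (0+1) (n+1) from rfl, ← Finset.Ico_add_one_right_eq_Icc,
      Finset.sum_Ico_eq_sum_range]
    apply Finset.sum_congr
    · rfl
    · intro i _
      have a1 : 1 + i = i + 1 := by omega
      have a2 : (i + 1) - 1 = i := by omega
      have a3 : n + 1 - (i + 1) = n - i := by omega
      rw [a1, a2, a3]
  rw [hR]
  rw [Finset.sum_range_succ' (fun k => (-1 : ℝ) ^ k * ((n+1).factorial : ℝ) / (((n + 1 - k).factorial : ℝ) * ((k.factorial : ℝ)) ^ 2) * x ^ k) (n+1)]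
  rw [Finset.sum_range_succ' (fun k => (-1 : ℝ) ^ k * (n.factorial : ℝ) / (((n - k).factorial : ℝ) * ((k.factorial : ℝ)) ^ 2) * x ^ k) n]
  have hz1 : (-1 : ℝ) ^ 0 * ((n+1).factorial : ℝ) / (((n + 1 - 0).factorial : ℝ) * (((0:ℕ).factorial : ℝ)) ^ 2) * x ^ 0 = 1 := by
    simp [Nat.factorial_ne_zero]
  have hz2 : (-1 : ℝ) ^ 0 * (n.factorial : ℝ) / (((n - 0).factorial : ℝ) * (((0:ℕ).factorial : ℝ)) ^ 2) * x ^ 0 = 1 := by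
    simp [Nat.factorial_ne_zero]
  rw [Finset.sum_range_succ (fun i => (-1 : ℝ) ^ (i+1) * ((n+1).factorial : ℝ) / (((n + 1 - (i+1)).factorial : ℝ) * (((i+1).factorial : ℝ)) ^ 2) * x ^ (i+1)) n]
  rw [Finset.sum_range_succ (fun i => (-1 : ℝ) ^ (i+1) * (n.factorial : ℝ) /
        (((i+1).factorial : ℝ) * ((i).factorial : ℝ) * ((n - i).factorial : ℝ)) * x ^ (i+1)) n]
  have hlast : (-1 : ℝ) ^ (n+1) * ((n+1).factorial : ℝ) / (((n + 1 - (n+1)).factorial : ℝ) * (((n+1).factorial : ℝ)) ^ 2) * x ^ (n+1)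
      = (-1 : ℝ) ^ (n+1) * (n.factorial : ℝ) /
        (((n+1).factorial : ℝ) * ((n).factorial : ℝ) * ((n - n).factorial : ℝ)) * x ^ (n+1) := by
    simp only [Nat.sub_self, Nat.add_sub_cancel_left, Nat.factorial_zero, Nat.cast_one]
    rw [Nat.factorial_succ]
    push_cast
    have e2 : (n.factorial : ℝ) ≠ 0 := Nat.cast_ne_zero.2 (Nat.factorial_ne_zero _)
    have e3 : ((n : ℝ) + 1) ≠ 0 := by positivity
    field_simp
  have hsum : ∑ i ∈ Finset.range n,
      ((-1 : ℝ) ^ (i+1) * ((n+1).factorial : ℝ) / (((n + 1 - (i+1)).factorial : ℝ) * (((i+1).factorial : ℝ)) ^ 2) * x ^ (i+1))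
      - ∑ i ∈ Finset.range n,
      ((-1 : ℝ) ^ (i+1) * (n.factorial : ℝ) / (((n - (i+1)).factorial : ℝ) * (((i+1).factorial : ℝ)) ^ 2) * x ^ (i+1))
      = ∑ i ∈ Finset.range n,
      ((-1 : ℝ) ^ (i+1) * (n.factorial : ℝ) /
        (((i+1).factorial : ℝ) * ((i).factorial : ℝ) * ((n - i).factorial : ℝ)) * x ^ (i+1)) := by
    rw [← Finset.sum_sub_distrib]
    apply Finset.sum_congr rfl
    intro i hi
    have hi' : i + 1 ≤ n := Finset.mem_range.1 hi
    have := lag_coeff_sub n (i+1) (by omega) hi' x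
    simpa using this
  linarith [hsum, hlast, hz1, hz2]
end

section
/- Let R be a real number and let y : ℝ → ℝ be four times continuously differentiable. Define the operator 𝓛[y](x) = x y''(x) + (1−x) y'(x). Then for every x > 0, (d²/dx²)(x² e^{−x} y''(x)) − (d/dx)(((2R+2)x + 2) e^{−x} y'(x)) = e^{−x} · [𝓛[𝓛[y]](x) − (2R+1)·𝓛[y](x) + 2 y'(x) − 2 y''(x)]. -/
open Real

/-- The Laguerre differential operator `𝓛[y](x) = x y''(x) + (1 - x) y'(x)`. -/
noncomputable def lagOp (y : ℝ → ℝ) (x : ℝ) : ℝ :=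
  x * deriv (deriv y) x + (1 - x) * deriv y x

theorem fourth_order_operator_factorization
    (R : ℝ) (y : ℝ → ℝ) (hy : ContDiff ℝ 4 y) :
    ∀ x : ℝ, 0 < x →
      deriv (deriv (fun t : ℝ => t ^ 2 * Real.exp (-t) * deriv (deriv y) t)) x -
        deriv (fun t : ℝ => ((2 * R + 2) * t + 2) * Real.exp (-t) * deriv y t) x =
      Real.exp (-x) *
        (lagOp (lagOp y) x - (2 * R + 1) * lagOp y x + 2 * deriv y x - 2 * deriv (deriv y) x) := by
  intro x hx
  set d1 := deriv y with hd1def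
  set d2 := deriv d1 with hd2def
  set d3 := deriv d2 with hd3def
  set d4 := deriv d3 with hd4def
  -- differentiability facts
  have h1 : ContDiff ℝ 3 d1 :=
    (contDiff_succ_iff_deriv.mp (show ContDiff ℝ ((3:ℕ)+1) y by exact_mod_cast hy)).2.2
  have h2 : ContDiff ℝ 2 d2 :=
    (contDiff_succ_iff_deriv.mp (show ContDiff ℝ ((2:ℕ)+1) d1 by exact_mod_cast h1)).2.2
  have h3 : ContDiff ℝ 1 d3 :=
    (contDiff_succ_iff_deriv.mp (show ContDiff ℝ ((1:ℕ)+1) d2 by exact_mod_cast h2)).2.2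
  have hdiff1 : Differentiable ℝ d1 := h1.differentiable (by norm_num)
  have hdiff2 : Differentiable ℝ d2 := h2.differentiable (by norm_num)
  have hdiff3 : Differentiable ℝ d3 := h3.differentiable (by norm_num)
  have hD1 : ∀ t : ℝ, HasDerivAt d1 (d2 t) t := fun t => (hdiff1 t).hasDerivAt
  have hD2 : ∀ t : ℝ, HasDerivAt d2 (d3 t) t := fun t => (hdiff2 t).hasDerivAt
  have hD3 : ∀ t : ℝ, HasDerivAt d3 (d4 t) t := fun t => (hdiff3 t).hasDerivAt
  have hexp : ∀ t : ℝ, HasDerivAt (fun s : ℝ => Real.exp (-s)) (-Real.exp (-t)) t := by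
    intro t
    simpa using (hasDerivAt_neg t).exp
  -- derivative of A := fun t => t^2 * exp(-t) * d2 t
  have hAderiv : deriv (fun t : ℝ => t ^ 2 * Real.exp (-t) * d2 t)
      = fun t : ℝ => (2 * t - t ^ 2) * Real.exp (-t) * d2 t + t ^ 2 * Real.exp (-t) * d3 t := by
    funext t
    have H : HasDerivAt (fun s : ℝ => s ^ 2 * Real.exp (-s) * d2 s)
        ((2 * t - t ^ 2) * Real.exp (-t) * d2 t + t ^ 2 * Real.exp (-t) * d3 t) t := by
      have := (((hasDerivAt_pow 2 t).fun_mul (hexp t)).fun_mul (hD2 t))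
      exact this.congr_deriv (by ring)
    exact H.deriv
  -- second derivative of A
  have hAderiv2 : deriv (deriv (fun t : ℝ => t ^ 2 * Real.exp (-t) * d2 t)) x
      = ((2 - 2 * x) - (2 * x - x ^ 2)) * Real.exp (-x) * d2 x
        + (2 * x - x ^ 2) * Real.exp (-x) * d3 x
        + (2 * x - x ^ 2) * Real.exp (-x) * d3 x
        + x ^ 2 * Real.exp (-x) * d4 x := by
    rw [hAderiv]
    have hlin : HasDerivAt (fun s : ℝ => 2 * s - s ^ 2) (2 - 2 * x) x := by
      have := ((hasDerivAt_id x).const_mul 2).fun_sub (hasDerivAt_pow 2 x)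
      exact this.congr_deriv (by ring)
    have H : HasDerivAt
        (fun t : ℝ => (2 * t - t ^ 2) * Real.exp (-t) * d2 t + t ^ 2 * Real.exp (-t) * d3 t)
        (((2 - 2 * x) - (2 * x - x ^ 2)) * Real.exp (-x) * d2 x
          + (2 * x - x ^ 2) * Real.exp (-x) * d3 x
          + (2 * x - x ^ 2) * Real.exp (-x) * d3 x
          + x ^ 2 * Real.exp (-x) * d4 x) x := by
      have := ((hlin.fun_mul (hexp x)).fun_mul (hD2 x)).fun_add (((hasDerivAt_pow 2 x).fun_mul (hexp x)).fun_mul (hD3 x))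
      exact this.congr_deriv (by ring)
    exact H.deriv
  -- derivative of B := fun t => ((2R+2)t+2) exp(-t) d1 t
  have hBderiv : deriv (fun t : ℝ => ((2 * R + 2) * t + 2) * Real.exp (-t) * d1 t) x
      = ((2 * R + 2) - ((2 * R + 2) * x + 2)) * Real.exp (-x) * d1 x
        + ((2 * R + 2) * x + 2) * Real.exp (-x) * d2 x := by
    have hlin : HasDerivAt (fun s : ℝ => (2 * R + 2) * s + 2) (2 * R + 2) x := by
      have := ((hasDerivAt_id x).const_mul (2 * R + 2)).add_const 2
      exact this.congr_deriv (by ring)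
    have H : HasDerivAt (fun t : ℝ => ((2 * R + 2) * t + 2) * Real.exp (-t) * d1 t)
        (((2 * R + 2) - ((2 * R + 2) * x + 2)) * Real.exp (-x) * d1 x
          + ((2 * R + 2) * x + 2) * Real.exp (-x) * d2 x) x := by
      have := (hlin.fun_mul (hexp x)).fun_mul (hD1 x)
      exact this.congr_deriv (by ring)
    exact H.deriv
  -- derivative of lagOp y
  have hLag : lagOp y = fun t : ℝ => t * d2 t + (1 - t) * d1 t := rfl
  have hLagDeriv : deriv (lagOp y)
      = fun t : ℝ => d2 t + t * d3 t + (-(d1 t) + (1 - t) * d2 t) := by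
    funext t
    rw [hLag]
    have H : HasDerivAt (fun s : ℝ => s * d2 s + (1 - s) * d1 s)
        (d2 t + t * d3 t + (-(d1 t) + (1 - t) * d2 t)) t := by
      have hone : HasDerivAt (fun s : ℝ => 1 - s) (-1 : ℝ) t := by
        simpa using (hasDerivAt_id t).const_sub 1
      have := ((hasDerivAt_id t).fun_mul (hD2 t)).fun_add (hone.fun_mul (hD1 t))
      simp only [id_eq] at this
      exact this.congr_deriv (by ring)
    exact H.deriv
  have hLagDeriv2 : deriv (deriv (lagOp y)) x
      = d3 x + (d3 x + x * d4 x) + (-(d2 x) + (-(d2 x) + (1 - x) * d3 x)) := by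
    rw [hLagDeriv]
    have hone : HasDerivAt (fun s : ℝ => 1 - s) (-1 : ℝ) x := by
      simpa using (hasDerivAt_id x).const_sub 1
    have H : HasDerivAt (fun t : ℝ => d2 t + t * d3 t + (-(d1 t) + (1 - t) * d2 t))
        (d3 x + (d3 x + x * d4 x) + (-(d2 x) + (-(d2 x) + (1 - x) * d3 x))) x := by
      have := ((hD2 x).fun_add ((hasDerivAt_id x).fun_mul (hD3 x))).fun_add
        (((hD1 x).fun_neg).fun_add (hone.fun_mul (hD2 x)))
      simp only [id_eq] at this
      exact this.congr_deriv (by ring)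
    exact H.deriv
  have hLagLag : lagOp (lagOp y) x
      = x * (d3 x + (d3 x + x * d4 x) + (-(d2 x) + (-(d2 x) + (1 - x) * d3 x)))
        + (1 - x) * (d2 x + x * d3 x + (-(d1 x) + (1 - x) * d2 x)) := by
    rw [lagOp, hLagDeriv2, hLagDeriv]
  rw [hAderiv2, hBderiv, hLagLag, hLag]
  ring
end

section
/- Let R > 0 be real, m ∈ ℕ, and λ_m = m(m+2R+1). Let y : ℝ → ℝ be a polynomial function of degree at most m such that for every x > 0, (d²/dx²)(x² e^{−x} y''(x)) − (d/dx)(((2R+2)x + 2) e^{−x} y'(x)) = e^{−x} λ_m y(x). Let c_n = ∫_0^∞ e^{−x} L_n(x) y(x) dx for each n. Then for every n with 0 ≤ n ≤ m, (m−n)(2R+n+m+1)·c_n = −2·Σ_{k=n+1}^{m} (k−n)·c_k. -/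
open Real MeasureTheory Filter Set Finset

namespace LagAux
open Polynomial

lemma alt_choose_real (n : ℕ) :
    ∑ i ∈ range (n+1), (-1:ℝ)^i * (n.choose i) = if n = 0 then 1 else 0 := by
  have this := Int.alternating_sum_range_choose (n := n)
  have h2 : ((∑ i ∈ range (n+1), (-1:ℤ)^i * (n.choose i) : ℤ) : ℝ)
      = ((if n = 0 then 1 else 0 : ℤ) : ℝ) := by rw [this]
  push_cast at h2
  exact h2

lemma Gsum : ∀ (n j s : ℕ), ∑ i ∈ range (n+1), (-1:ℝ)^i * (n.choose i) * ((i+s).choose j)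
    = if n ≤ j then (-1:ℝ)^n * (s.choose (j-n)) else 0 := by
  intro n
  induction n with
  | zero => intro j s; simp
  | succ n ih =>
    intro j s
    have split : ∑ i ∈ range (n+1+1), (-1:ℝ)^i * ((n+1).choose i) * ((i+s).choose j)
        = (∑ i ∈ range (n+1), (-1:ℝ)^i * (n.choose i) * ((i+s).choose j))
          - ∑ i ∈ range (n+1), (-1:ℝ)^i * (n.choose i) * ((i+(s+1)).choose j) := by
      rw [Finset.sum_range_succ' (fun i => (-1:ℝ)^i * ((n+1).choose i) * ((i+s).choose j)) (n+1)]
      have e1 : ∀ i ∈ range (n+1), (-1:ℝ)^(i+1) * ((n+1).choose (i+1)) * (((i+1)+s).choose j)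
          = -((-1:ℝ)^i * (n.choose i) * ((i+(s+1)).choose j))
            + (-1:ℝ)^(i+1) * (n.choose (i+1)) * (((i+1)+s).choose j) := by
        intro i _
        rw [Nat.choose_succ_succ]
        push_cast
        have : i + 1 + s = i + (s+1) := by ring
        rw [this]; ring
      rw [Finset.sum_congr rfl e1, Finset.sum_add_distrib]
      have e2 : ∑ i ∈ range (n+1), (-1:ℝ)^(i+1) * (n.choose (i+1)) * (((i+1)+s).choose j)
          = (∑ i ∈ range (n+1+1), (-1:ℝ)^i * (n.choose i) * ((i+s).choose j))
            - (-1:ℝ)^0 * (n.choose 0) * ((0+s).choose j) := by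
        rw [Finset.sum_range_succ' (fun i => (-1:ℝ)^i * (n.choose i) * ((i+s).choose j)) (n+1)]
        ring
      rw [e2, Finset.sum_range_succ (fun i => (-1:ℝ)^i * (n.choose i) * ((i+s).choose j)) (n+1)]
      simp [Nat.choose_succ_self]
      ring
    rcases Nat.eq_zero_or_pos j with hj | hj
    · subst hj
      have z : ∀ s' : ℕ, ∑ i ∈ range (n+1), (-1:ℝ)^i * (n.choose i) * ((i+s').choose 0)
          = if n = 0 then 1 else 0 := by
        intro s'; simpa using alt_choose_real n
      rw [split, z, z]
      simp [Nat.succ_ne_zero]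
    · obtain ⟨j', rfl⟩ : ∃ j', j = j' + 1 := ⟨j - 1, (Nat.succ_pred_eq_of_pos hj).symm⟩
      have pas : ∑ i ∈ range (n+1), (-1:ℝ)^i * (n.choose i) * ((i+(s+1)).choose (j'+1))
          = (∑ i ∈ range (n+1), (-1:ℝ)^i * (n.choose i) * ((i+s).choose (j'+1)))
            + ∑ i ∈ range (n+1), (-1:ℝ)^i * (n.choose i) * ((i+s).choose j') := by
        rw [← Finset.sum_add_distrib]
        refine Finset.sum_congr rfl fun i _ => ?_
        have : i + (s+1) = (i+s) + 1 := by ring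
        rw [this, Nat.choose_succ_succ]
        push_cast; ring
      rw [split, pas, ih, ih]
      have hiff : n + 1 ≤ j' + 1 ↔ n ≤ j' := by omega
      by_cases h : n ≤ j'
      · rw [if_pos (hiff.mpr h), if_pos h]
        have : j' + 1 - (n+1) = j' - n := by omega
        rw [this]; ring
      · rw [if_neg (fun hh => h (hiff.mp hh)), if_neg h]; ring

noncomputable def lagC (n k : ℕ) : ℝ :=
  (-1 : ℝ) ^ k * (n.factorial : ℝ) / (((n - k).factorial : ℝ) * ((k.factorial : ℝ)) ^ 2)

noncomputable def Lpoly (n : ℕ) : Polynomial ℝ :=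
  ∑ k ∈ Finset.range (n + 1), C (lagC n k) * X ^ k

lemma Lpoly_def (n : ℕ) : Lpoly n = ∑ k ∈ Finset.range (n + 1), C (lagC n k) * X ^ k := rfl

lemma Lpoly_eval (n : ℕ) (x : ℝ) : (Lpoly n).eval x = lag0 n x := by
  simp [Lpoly, lag0, lagC, eval_finset_sum]

lemma lagC_eq {n k : ℕ} (h : k ≤ n) :
    lagC n k = (-1 : ℝ) ^ k * (n.choose k) / k.factorial := by
  rw [lagC, Nat.cast_choose ℝ h]
  have h1 : ((k.factorial : ℝ)) ≠ 0 := Nat.cast_ne_zero.mpr (Nat.factorial_ne_zero _)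
  have h2 : (((n - k).factorial : ℝ)) ≠ 0 := Nat.cast_ne_zero.mpr (Nat.factorial_ne_zero _)
  field_simp

lemma Lpoly_coeff (n j : ℕ) : (Lpoly n).coeff j = if j ≤ n then lagC n j else 0 := by
  rw [Lpoly, finset_sum_coeff]
  simp only [coeff_C_mul, coeff_X_pow]
  by_cases h : j ≤ n
  · rw [Finset.sum_eq_single j (fun b _ hb => by simp [Ne.symm hb])
      (fun hj => absurd (Finset.mem_range.mpr (by omega)) hj)]
    simp [h]
  · rw [if_neg h, Finset.sum_eq_zero]
    intro b hb
    simp only [Finset.mem_range] at hb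
    rw [if_neg (by omega), mul_zero]

lemma Lpoly_natDegree_le (n : ℕ) : (Lpoly n).natDegree ≤ n := by
  rw [natDegree_le_iff_coeff_eq_zero]
  intro N hN
  rw [Lpoly_coeff, if_neg (by omega)]

noncomputable def Phi (f : Polynomial ℝ) : ℝ :=
  ∑ j ∈ range (f.natDegree + 1), f.coeff j * j.factorial

lemma Phi_eq {f : Polynomial ℝ} {N : ℕ} (h : f.natDegree < N) :
    Phi f = ∑ j ∈ range N, f.coeff j * j.factorial := by
  rw [Phi]
  apply Finset.sum_subset (Finset.range_subset_range.mpr h)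
  intro j _ hj
  simp only [Finset.mem_range, not_lt] at hj
  rw [coeff_eq_zero_of_natDegree_lt (by omega), zero_mul]

@[simp] lemma Phi_zero : Phi 0 = 0 := by simp [Phi]

lemma Phi_add (f g : Polynomial ℝ) : Phi (f + g) = Phi f + Phi g := by
  set N := (f + g).natDegree + f.natDegree + g.natDegree + 1 with hN
  rw [Phi_eq (f := f + g) (N := N) (by omega), Phi_eq (f := f) (N := N) (by omega),
    Phi_eq (f := g) (N := N) (by omega), ← Finset.sum_add_distrib]
  exact Finset.sum_congr rfl fun j _ => by rw [coeff_add]; ring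

lemma Phi_C_mul (a : ℝ) (f : Polynomial ℝ) : Phi (C a * f) = a * Phi f := by
  rw [Phi_eq (f := C a * f) (N := f.natDegree + 1)
      (lt_of_le_of_lt (natDegree_C_mul_le a f) (by omega)),
    Phi, Finset.mul_sum]
  exact Finset.sum_congr rfl fun j _ => by rw [coeff_C_mul]; ring

lemma Phi_finset_sum {ι : Type*} (s : Finset ι) (F : ι → Polynomial ℝ) :
    Phi (∑ i ∈ s, F i) = ∑ i ∈ s, Phi (F i) := by
  induction s using Finset.cons_induction with
  | empty => simp
  | cons a s ha ih => rw [Finset.sum_cons, Phi_add, ih, Finset.sum_cons]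

lemma Phi_C_mul_X_pow (a : ℝ) (k : ℕ) : Phi (C a * X ^ k) = a * k.factorial := by
  rw [Phi_C_mul]
  have : Phi (X ^ k : Polynomial ℝ) = k.factorial := by
    rw [Phi_eq (f := (X:Polynomial ℝ)^k) (N := k + 1) (by simp [natDegree_X_pow])]
    simp [coeff_X_pow]
  rw [this]

lemma Phi_L_Xpow (n j : ℕ) :
    Phi (Lpoly n * X ^ j) = if n ≤ j then (-1:ℝ)^n * (j.choose n) * j.factorial else 0 := by
  have expand : Lpoly n * X ^ j = ∑ i ∈ range (n+1), C (lagC n i) * X ^ (i + j) := by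
    rw [Lpoly_def, Finset.sum_mul]
    exact Finset.sum_congr rfl fun i _ => by rw [mul_assoc, ← pow_add]
  rw [expand, Phi_finset_sum]
  simp only [Phi_C_mul_X_pow]
  have termeq : ∀ i ∈ range (n+1),
      lagC n i * ((i+j).factorial : ℝ) = ((-1:ℝ)^i * (n.choose i) * ((i+j).choose j)) * j.factorial := by
    intro i hi
    simp only [Finset.mem_range] at hi
    rw [lagC_eq (by omega)]
    have hfac : ((i+j).factorial : ℝ) = ((i+j).choose j) * j.factorial * i.factorial := by
      have := Nat.choose_mul_factorial_mul_factorial (Nat.le_add_left j i)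
      have h2 : i + j - j = i := by omega
      rw [h2] at this
      exact_mod_cast this.symm
    rw [hfac]
    have : (i.factorial : ℝ) ≠ 0 := Nat.cast_ne_zero.mpr (Nat.factorial_ne_zero _)
    field_simp
    try ring
  rw [Finset.sum_congr rfl termeq, ← Finset.sum_mul, Gsum n j j]
  by_cases h : n ≤ j
  · rw [if_pos h, if_pos h, Nat.choose_symm h]; try ring
  · rw [if_neg h, if_neg h, zero_mul]

lemma Phi_LL (n k : ℕ) : Phi (Lpoly n * Lpoly k) = if n = k then 1 else 0 := by
  have expand : Lpoly n * Lpoly k = ∑ j ∈ range (k+1), C (lagC k j) * (Lpoly n * X ^ j) := by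
    rw [Lpoly_def k, Finset.mul_sum]
    exact Finset.sum_congr rfl fun j _ => by ring
  rw [expand, Phi_finset_sum]
  simp only [Phi_C_mul, Phi_L_Xpow]
  have termeq : ∀ j ∈ range (k+1),
      lagC k j * (if n ≤ j then (-1:ℝ)^n * (j.choose n) * j.factorial else 0)
      = (-1:ℝ)^n * ((-1:ℝ)^j * (k.choose j) * ((j+0).choose n)) := by
    intro j hj
    simp only [Finset.mem_range] at hj
    rw [lagC_eq (by omega), Nat.add_zero]
    by_cases h : n ≤ j
    · rw [if_pos h]
      have : (j.factorial : ℝ) ≠ 0 := Nat.cast_ne_zero.mpr (Nat.factorial_ne_zero _)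
      field_simp
    · rw [if_neg h, mul_zero, Nat.choose_eq_zero_of_lt (show j < n by omega)]
      simp
  rw [Finset.sum_congr rfl termeq, ← Finset.mul_sum, Gsum k n 0]
  by_cases h : n = k
  · subst h; rw [if_pos le_rfl, if_pos rfl]
    simp only [Nat.sub_self, Nat.choose_self, Nat.cast_one, mul_one, ← pow_add, ← two_mul,
      pow_mul]
    norm_num
  · rw [if_neg h]
    by_cases h2 : k ≤ n
    · rw [if_pos h2, Nat.choose_eq_zero_of_lt (show 0 < n - k by omega)]; simp
    · rw [if_neg h2, mul_zero]

lemma sum_range_choose' (n j : ℕ) : ∑ i ∈ range n, i.choose j = n.choose (j+1) := by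
  induction n with
  | zero => simp
  | succ n ih => rw [Finset.sum_range_succ, ih, Nat.choose_succ_succ]; simp [Nat.succ_eq_add_one]; omega

lemma Lpoly_coeff_key (n j : ℕ) :
    (Lpoly n).coeff (j+1) * ((j:ℝ)+1) = -((-1:ℝ)^j * (n.choose (j+1)) / j.factorial) := by
  rw [Lpoly_coeff]
  by_cases h : j + 1 ≤ n
  · rw [if_pos h, lagC_eq h]
    have h1 : ((j+1).factorial : ℝ) = (j+1) * j.factorial := by
      rw [Nat.factorial_succ]; push_cast; ring
    rw [h1, pow_succ]
    have : (j.factorial : ℝ) ≠ 0 := Nat.cast_ne_zero.mpr (Nat.factorial_ne_zero _)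
    field_simp
  · rw [if_neg h, Nat.choose_eq_zero_of_lt (show n < j + 1 by omega)]
    simp

lemma Lpoly_deriv (n : ℕ) : derivative (Lpoly n) = -∑ i ∈ range n, Lpoly i := by
  ext j
  rw [coeff_derivative, Lpoly_coeff_key]
  rw [coeff_neg, finset_sum_coeff]
  rw [Finset.sum_congr rfl (fun i (hi : i ∈ range n) => Lpoly_coeff i j)]
  have termeq : ∀ i ∈ range n, (if j ≤ i then lagC i j else 0)
      = (-1:ℝ)^j * (i.choose j) / j.factorial := by
    intro i _
    by_cases h : j ≤ i
    · rw [if_pos h, lagC_eq h]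
    · rw [if_neg h, Nat.choose_eq_zero_of_lt (show i < j by omega)]; simp
  rw [Finset.sum_congr rfl termeq]
  rw [← Finset.sum_div, ← Finset.mul_sum]
  rw [show (∑ i ∈ range n, ((i.choose j : ℕ) : ℝ)) = ((n.choose (j+1) : ℕ) : ℝ) by
    exact_mod_cast sum_range_choose' n j]

lemma key_ode (n j : ℕ) :
    ((j:ℝ)+1)^2 * (Lpoly n).coeff (j+1) + ((n:ℝ) - j) * (Lpoly n).coeff j = 0 := by
  rw [Lpoly_coeff, Lpoly_coeff]
  by_cases h : j < n
  · rw [if_pos (by omega : j + 1 ≤ n), if_pos (by omega : j ≤ n),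
      lagC_eq (by omega : j + 1 ≤ n), lagC_eq (by omega : j ≤ n)]
    have hc := Nat.choose_succ_right_eq n j
    have hc' : ((n.choose (j+1) : ℝ)) * ((j:ℝ)+1) = (n.choose j : ℝ) * ((n:ℝ) - j) := by
      have h3 : ((n:ℝ) - j) = ((n - j : ℕ) : ℝ) := by rw [Nat.cast_sub h.le]
      rw [h3]
      exact_mod_cast hc
    have h1 : ((j+1).factorial : ℝ) = ((j:ℝ)+1) * j.factorial := by
      rw [Nat.factorial_succ]; push_cast; ring
    rw [h1]
    have hj : (j.factorial : ℝ) ≠ 0 := Nat.cast_ne_zero.mpr (Nat.factorial_ne_zero _)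
    have hj1 : ((j:ℝ)+1) ≠ 0 := by positivity
    field_simp
    linear_combination (-(-1:ℝ)^j) * hc'
  · by_cases h2 : j = n
    · subst h2
      rw [if_neg (by omega), if_pos le_rfl]
      simp
    · rw [if_neg (by omega), if_neg (by omega)]
      simp

lemma Lpoly_ode (n : ℕ) :
    X * derivative (derivative (Lpoly n)) + (1 - X) * derivative (Lpoly n)
      + C (n:ℝ) * Lpoly n = 0 := by
  ext j
  simp only [coeff_add, coeff_zero, sub_mul, one_mul, coeff_sub, coeff_C_mul]
  rcases j with _ | j
  · simp only [mul_coeff_zero, coeff_X_zero, zero_mul, coeff_derivative]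
    have := key_ode n 0
    push_cast at this ⊢
    linarith
  · simp only [coeff_X_mul, coeff_derivative]
    have k1 := key_ode n (j+1)
    push_cast at k1 ⊢
    linear_combination k1

lemma tri (g : ℕ → Polynomial ℝ) (n : ℕ) :
    (∑ i ∈ range n, ∑ t ∈ range i, g t) = ∑ t ∈ range n, C ((n:ℝ) - 1 - t) * g t := by
  induction n with
  | zero => simp
  | succ n ih =>
    rw [Finset.sum_range_succ, ih, Finset.sum_range_succ
      (fun t => C (((n+1:ℕ):ℝ) - 1 - t) * g t) n]
    have last0 : C (((n+1:ℕ):ℝ) - 1 - (n:ℝ)) * g n = 0 := by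
      push_cast
      rw [show ((n:ℝ) + 1 - 1 - n) = 0 by ring]
      simp
    rw [last0, add_zero, ← Finset.sum_add_distrib]
    refine Finset.sum_congr rfl fun t _ => ?_
    have : (((n+1:ℕ):ℝ) - 1 - t) = ((n:ℝ) - 1 - t) + 1 := by push_cast; ring
    rw [this, C_add, C_1, add_mul, one_mul]

lemma DLag (n : ℕ) :
    derivative (derivative (Lpoly n)) - derivative (Lpoly n)
      = ∑ t ∈ range n, C ((n:ℝ) - t) * Lpoly t := by
  rw [Lpoly_deriv n, derivative_neg, derivative_sum]
  rw [Finset.sum_congr rfl (fun i (_ : i ∈ range n) => Lpoly_deriv i)]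
  rw [Finset.sum_neg_distrib, neg_neg, sub_neg_eq_add, tri]
  rw [← Finset.sum_add_distrib]
  refine Finset.sum_congr rfl fun t _ => ?_
  have : ((n:ℝ) - t) = ((n:ℝ) - 1 - t) + 1 := by ring
  rw [this, C_add, C_1, add_mul, one_mul]

noncomputable def Apoly (f : Polynomial ℝ) : Polynomial ℝ :=
  X * derivative (derivative f) + (1 - X) * derivative f

lemma Apoly_L (n : ℕ) : Apoly (Lpoly n) = -(C (n:ℝ) * Lpoly n) := by
  have := Lpoly_ode n
  rw [Apoly]
  linear_combination this

lemma Apoly_C_mul (a : ℝ) (f : Polynomial ℝ) : Apoly (C a * f) = C a * Apoly f := by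
  rw [Apoly, Apoly, derivative_C_mul, derivative_C_mul]
  ring

lemma Apoly_sum {ι : Type*} (s : Finset ι) (F : ι → Polynomial ℝ) :
    Apoly (∑ i ∈ s, F i) = ∑ i ∈ s, Apoly (F i) := by
  rw [Apoly, derivative_sum]
  rw [Finset.sum_congr rfl (fun i (_ : i ∈ s) => (rfl : derivative (F i) = derivative (F i)))]
  simp only [Apoly, derivative_sum, Finset.mul_sum, ← Finset.sum_add_distrib]

-- the operator identity
lemma op_identity (R : ℝ) (p : Polynomial ℝ) :
    (derivative ((derivative (X^2 * derivative (derivative p)))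
        - X^2 * derivative (derivative p))
      - ((derivative (X^2 * derivative (derivative p))) - X^2 * derivative (derivative p)))
    - ((derivative ((C (2*R+2) * X + C 2) * derivative p))
        - (C (2*R+2) * X + C 2) * derivative p)
    = Apoly (Apoly p) - C (2*R+1) * Apoly p
      - C 2 * (derivative (derivative p) - derivative p) := by
  have hC2 : (C (2:ℝ)) = 2 := by
    rw [show (2:ℝ) = ((2:ℕ):ℝ) by norm_num, C_eq_natCast]; norm_num
  simp only [Apoly, derivative_mul, derivative_add, derivative_sub, derivative_X, derivative_C,
    derivative_one, derivative_X_pow, derivative_C_mul, derivative_zero, C_add, C_mul, C_1,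
    hC2, derivative_ofNat]
  push_cast
  simp only [hC2, C_1, Nat.cast_ofNat, Nat.cast_one]
  ring

lemma lagC_diag_ne (n : ℕ) : lagC n n ≠ 0 := by
  rw [lagC_eq le_rfl, Nat.choose_self]
  have h1 : ((n.factorial : ℝ)) ≠ 0 := Nat.cast_ne_zero.mpr (Nat.factorial_ne_zero _)
  have h2 : ((-1:ℝ))^n ≠ 0 := pow_ne_zero _ (by norm_num)
  simp only [Nat.cast_one, mul_one]
  exact div_ne_zero h2 h1

lemma lag_indep : ∀ (N : ℕ) (b : ℕ → ℝ),
    (∑ k ∈ range N, C (b k) * Lpoly k) = 0 → ∀ k < N, b k = 0 := by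
  intro N
  induction N with
  | zero => intro b _ k hk; omega
  | succ N ih =>
    intro b hb k hk
    have hcoeff : (∑ k ∈ range (N+1), C (b k) * Lpoly k).coeff N = 0 := by rw [hb]; simp
    rw [finset_sum_coeff] at hcoeff
    simp only [coeff_C_mul, Lpoly_coeff] at hcoeff
    rw [Finset.sum_range_succ] at hcoeff
    have hzero : ∑ k ∈ range N, b k * (if N ≤ k then lagC k N else 0) = 0 := by
      apply Finset.sum_eq_zero
      intro i hi
      simp only [Finset.mem_range] at hi
      rw [if_neg (by omega), mul_zero]
    rw [hzero, zero_add, if_pos le_rfl] at hcoeff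
    have hbN : b N = 0 := by
      rcases mul_eq_zero.mp hcoeff with h | h
      · exact h
      · exact absurd h (lagC_diag_ne N)
    rcases Nat.lt_succ_iff_lt_or_eq.mp hk with h | h
    · apply ih b _ k h
      rw [Finset.sum_range_succ, hbN] at hb
      simpa using hb
    · rw [h]; exact hbN

lemma lag_basis : ∀ (M : ℕ) (p : Polynomial ℝ), p.natDegree ≤ M →
    ∃ a : ℕ → ℝ, p = ∑ k ∈ range (M+1), C (a k) * Lpoly k := by
  intro M
  induction M with
  | zero =>
    intro p hp
    refine ⟨fun _ => p.coeff 0, ?_⟩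
    have hL0 : Lpoly 0 = C (lagC 0 0) := by
      have : ∀ j, (Lpoly 0).coeff j = (C (lagC 0 0)).coeff j := by
        intro j
        rw [Lpoly_coeff, coeff_C]
        rcases j with _ | j <;> simp
      exact Polynomial.ext this
    have h00 : lagC 0 0 = 1 := by rw [lagC_eq le_rfl]; simp
    rw [Finset.sum_range_one, hL0, h00, eq_C_of_natDegree_le_zero hp]
    simp
  | succ M ih =>
    intro p hp
    set c := p.coeff (M+1) / lagC (M+1) (M+1) with hc
    set q := p - C c * Lpoly (M+1) with hq
    have hqdeg : q.natDegree ≤ M := by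
      rw [natDegree_le_iff_coeff_eq_zero]
      intro N hN
      rw [hq, coeff_sub, coeff_C_mul, Lpoly_coeff]
      rcases Nat.lt_or_ge (M+1) N with h | h
      · rw [coeff_eq_zero_of_natDegree_lt (lt_of_le_of_lt hp h), if_neg (by omega)]
        simp
      · have hNM : N = M + 1 := by omega
        rw [hNM, if_pos le_rfl, hc, div_mul_cancel₀ _ (lagC_diag_ne (M+1))]
        simp
    obtain ⟨a, ha⟩ := ih q hqdeg
    refine ⟨Function.update a (M+1) c, ?_⟩
    rw [Finset.sum_range_succ, Function.update_self]
    have : ∑ k ∈ range (M+1), C (Function.update a (M+1) c k) * Lpoly k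
        = ∑ k ∈ range (M+1), C (a k) * Lpoly k := by
      refine Finset.sum_congr rfl fun k hk => ?_
      simp only [Finset.mem_range] at hk
      rw [Function.update_of_ne (by omega)]
    rw [this, ← ha, hq]
    ring

lemma integrable_exp_pow (j : ℕ) :
    IntegrableOn (fun x : ℝ => Real.exp (-x) * x ^ j) (Set.Ioi 0) := by
  have h := Real.GammaIntegral_convergent (s := (j+1:ℝ)) (by positivity)
  apply h.congr_fun ?_ measurableSet_Ioi
  intro x hx
  simp only []
  rw [show ((j:ℝ)+1) - 1 = (j:ℝ) by ring, Real.rpow_natCast]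

lemma integral_exp_pow (j : ℕ) :
    ∫ x in Set.Ioi (0:ℝ), Real.exp (-x) * x ^ j = j.factorial := by
  have h := Real.Gamma_eq_integral (s := (j+1:ℝ)) (by positivity)
  have h2 : Real.Gamma ((j:ℝ)+1) = j.factorial := by
    exact_mod_cast Real.Gamma_nat_eq_factorial j
  rw [h2] at h
  rw [h]
  apply setIntegral_congr_fun measurableSet_Ioi
  intro x hx
  have he : ((j:ℝ)+1) - 1 = (j:ℝ) := by ring
  simp only [he, Real.rpow_natCast]

lemma integral_exp_poly (f : Polynomial ℝ) :
    ∫ x in Set.Ioi (0:ℝ), Real.exp (-x) * f.eval x = Phi f := by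
  have hfun : ∀ x : ℝ, Real.exp (-x) * f.eval x
      = ∑ j ∈ range (f.natDegree + 1), f.coeff j * (Real.exp (-x) * x ^ j) := by
    intro x
    rw [eval_eq_sum_range, Finset.mul_sum]
    exact Finset.sum_congr rfl fun j _ => by ring
  rw [show (fun x : ℝ => Real.exp (-x) * f.eval x)
      = fun x : ℝ => ∑ j ∈ range (f.natDegree + 1), f.coeff j * (Real.exp (-x) * x ^ j)
    from funext hfun]
  rw [integral_finset_sum _ (fun j _ => ((integrable_exp_pow j).const_mul (f.coeff j)))]
  rw [Phi]
  refine Finset.sum_congr rfl fun j _ => ?_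
  rw [MeasureTheory.integral_const_mul, integral_exp_pow]

lemma deriv_exp_poly (g : Polynomial ℝ) (x : ℝ) :
    deriv (fun t : ℝ => Real.exp (-t) * g.eval t) x
      = Real.exp (-x) * (derivative g - g).eval x := by
  have h1 : HasDerivAt (fun t : ℝ => Real.exp (-t)) (Real.exp (-x) * (-1)) x :=
    (hasDerivAt_neg x).exp
  have h2 : HasDerivAt (fun t : ℝ => g.eval t) (g.derivative.eval x) x := g.hasDerivAt x
  have h3 := h1.mul h2
  rw [show (fun t : ℝ => Real.exp (-t) * g.eval t) = (fun t : ℝ => Real.exp (-t)) * (fun t : ℝ => g.eval t) from rfl, h3.deriv, eval_sub]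
  ring

lemma Apoly_neg (f : Polynomial ℝ) : Apoly (-f) = -Apoly f := by
  rw [Apoly, Apoly, derivative_neg, derivative_neg]; ring

lemma Dterm (R lam : ℝ) (k : ℕ) :
    Apoly (Apoly (Lpoly k)) - C (2*R+1) * Apoly (Lpoly k)
      - C 2 * (derivative (derivative (Lpoly k)) - derivative (Lpoly k)) - C lam * Lpoly k
    = C ((k:ℝ)^2 + (2*R+1)*(k:ℝ) - lam) * Lpoly k
      - ∑ t ∈ range k, C (2*((k:ℝ) - (t:ℝ))) * Lpoly t := by
  have h2 : C (2:ℝ) * ∑ t ∈ range k, C ((k:ℝ) - 1 - t + 1) * Lpoly t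
      = ∑ t ∈ range k, C (2*((k:ℝ)-t)) * Lpoly t := by
    rw [Finset.mul_sum]
    refine Finset.sum_congr rfl fun t _ => ?_
    rw [← mul_assoc, ← C_mul]
    congr 2
    ring
  have hD := DLag k
  have hcongr : ∑ t ∈ range k, C ((k:ℝ) - t) * Lpoly t
      = ∑ t ∈ range k, C ((k:ℝ) - 1 - t + 1) * Lpoly t := by
    refine Finset.sum_congr rfl fun t _ => ?_
    congr 2
    ring
  rw [hcongr] at hD
  rw [Apoly_L, Apoly_neg, Apoly_C_mul, Apoly_L, hD, ← h2]
  simp only [C_add, C_sub, C_mul, C_pow, C_1]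
  ring

lemma swapsum (F : ℕ → ℕ → Polynomial ℝ) : ∀ N, (∑ k ∈ range N, ∑ t ∈ range k, F k t)
    = ∑ t ∈ range N, ∑ k ∈ Finset.Ico (t+1) N, F k t := by
  intro N
  induction N with
  | zero => simp
  | succ N ih =>
    rw [Finset.sum_range_succ, ih,
      Finset.sum_range_succ (fun t => ∑ k ∈ Finset.Ico (t+1) (N+1), F k t) N,
      Finset.Ico_self, Finset.sum_empty, add_zero, ← Finset.sum_add_distrib]
    refine Finset.sum_congr rfl fun t ht => ?_
    simp only [Finset.mem_range] at ht
    rw [Finset.sum_Ico_succ_top (by omega)]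

end LagAux

open LagAux Polynomial

theorem transformed_fourth_order_system
    (R : ℝ) (hR : 0 < R) (m : ℕ) (y : ℝ → ℝ) (p : Polynomial ℝ)
    (hy : ∀ x : ℝ, y x = p.eval x) (hdeg : p.natDegree ≤ m)
    (hode : ∀ x : ℝ, 0 < x →
      deriv (deriv (fun t : ℝ => t ^ 2 * Real.exp (-t) * deriv (deriv y) t)) x -
        deriv (fun t : ℝ => ((2 * R + 2) * t + 2) * Real.exp (-t) * deriv y t) x =
      Real.exp (-x) * ((m : ℝ) * (m + 2 * R + 1)) * y x) :
    ∀ n : ℕ, n ≤ m →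
      ((m : ℝ) - n) * (2 * R + n + m + 1) *
          (∫ x in Set.Ioi (0 : ℝ), Real.exp (-x) * lag0 n x * y x) =
        -2 * ∑ k ∈ Finset.Icc (n + 1) m,
          ((k : ℝ) - n) * ∫ x in Set.Ioi (0 : ℝ), Real.exp (-x) * lag0 k x * y x := by
  intro n hn
  have hyp : y = fun t : ℝ => p.eval t := funext hy
  have hdy : deriv y = fun t : ℝ => (derivative p).eval t := by
    rw [hyp]; funext t; exact Polynomial.deriv (p := p) (x := t)
  have hddy : deriv (deriv y) = fun t : ℝ => (derivative (derivative p)).eval t := by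
    rw [hdy]; funext t; exact Polynomial.deriv (p := derivative p) (x := t)
  have hf1 : (fun t : ℝ => t ^ 2 * Real.exp (-t) * deriv (deriv y) t)
      = fun t : ℝ => Real.exp (-t) * (X^2 * derivative (derivative p)).eval t := by
    funext t; rw [hddy]; simp only [eval_mul, eval_pow, eval_X]; ring
  have hf2 : (fun t : ℝ => ((2 * R + 2) * t + 2) * Real.exp (-t) * deriv y t)
      = fun t : ℝ => Real.exp (-t) * ((C (2*R+2) * X + C 2) * derivative p).eval t := by
    funext t; rw [hdy]
    simp only [eval_mul, eval_add, eval_C, eval_X]; ring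
  have hd1 : deriv (fun t : ℝ => t ^ 2 * Real.exp (-t) * deriv (deriv y) t)
      = fun x : ℝ => Real.exp (-x) *
        ((derivative (X^2 * derivative (derivative p)) - X^2 * derivative (derivative p)).eval x) := by
    rw [hf1]; funext x; exact deriv_exp_poly _ x
  have hd2 : deriv (deriv (fun t : ℝ => t ^ 2 * Real.exp (-t) * deriv (deriv y) t))
      = fun x : ℝ => Real.exp (-x) *
        ((derivative (derivative (X^2 * derivative (derivative p)) - X^2 * derivative (derivative p))
          - (derivative (X^2 * derivative (derivative p)) - X^2 * derivative (derivative p))).eval x) := by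
    rw [hd1]; funext x; exact deriv_exp_poly _ x
  have hd3 : deriv (fun t : ℝ => ((2 * R + 2) * t + 2) * Real.exp (-t) * deriv y t)
      = fun x : ℝ => Real.exp (-x) *
        ((derivative ((C (2*R+2) * X + C 2) * derivative p)
          - (C (2*R+2) * X + C 2) * derivative p).eval x) := by
    rw [hf2]; funext x; exact deriv_exp_poly _ x
  set lam : ℝ := (m:ℝ) * ((m:ℝ) + 2 * R + 1) with hlam
  have hQ : (derivative (derivative (X^2 * derivative (derivative p)) - X^2 * derivative (derivative p))
          - (derivative (X^2 * derivative (derivative p)) - X^2 * derivative (derivative p)))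
      - (derivative ((C (2*R+2) * X + C 2) * derivative p)
          - (C (2*R+2) * X + C 2) * derivative p) - C lam * p = 0 := by
    apply Polynomial.eq_zero_of_infinite_isRoot
    apply Set.Infinite.mono ?_ (Set.Ioi_infinite (0:ℝ))
    intro x hx
    have h := hode x hx
    rw [hd2, hd3] at h
    simp only [] at h
    rw [hy x] at h
    have hexp : Real.exp (-x) ≠ 0 := Real.exp_ne_zero _
    simp only [Set.mem_setOf_eq, IsRoot, eval_sub, eval_mul, eval_C]
    have hmul : Real.exp (-x) * ((derivative (derivative (X^2 * derivative (derivative p)) - X^2 * derivative (derivative p))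
          - (derivative (X^2 * derivative (derivative p)) - X^2 * derivative (derivative p))).eval x
      - (derivative ((C (2*R+2) * X + C 2) * derivative p)
          - (C (2*R+2) * X + C 2) * derivative p).eval x - lam * p.eval x) = 0 := by
      simp only [eval_sub, eval_mul, eval_C] at h ⊢
      linear_combination h
    have := (mul_eq_zero.mp hmul).resolve_left hexp
    simp only [eval_sub, eval_mul, eval_C] at this ⊢
    linear_combination this
  have heq : Apoly (Apoly p) - C (2*R+1) * Apoly p
      - C 2 * (derivative (derivative p) - derivative p) = C lam * p := by
    have h5 := op_identity R p
    linear_combination hQ - h5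
  obtain ⟨a, ha⟩ := lag_basis m p hdeg
  have e1 : Apoly p = ∑ k ∈ range (m+1), C (a k) * Apoly (Lpoly k) := by
    rw [ha, Apoly_sum]; exact Finset.sum_congr rfl fun k _ => Apoly_C_mul _ _
  have e2 : Apoly (Apoly p) = ∑ k ∈ range (m+1), C (a k) * Apoly (Apoly (Lpoly k)) := by
    rw [e1, Apoly_sum]; exact Finset.sum_congr rfl fun k _ => Apoly_C_mul _ _
  have e3 : derivative p = ∑ k ∈ range (m+1), C (a k) * derivative (Lpoly k) := by
    rw [ha, derivative_sum]; exact Finset.sum_congr rfl fun k _ => derivative_C_mul _ _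
  have e4 : derivative (derivative p) = ∑ k ∈ range (m+1), C (a k) * derivative (derivative (Lpoly k)) := by
    rw [e3, derivative_sum]; exact Finset.sum_congr rfl fun k _ => derivative_C_mul _ _
  have hT0 : ∑ k ∈ range (m+1), C (a k) * (Apoly (Apoly (Lpoly k)) - C (2*R+1) * Apoly (Lpoly k)
      - C 2 * (derivative (derivative (Lpoly k)) - derivative (Lpoly k)) - C lam * Lpoly k) = 0 := by
    have hrw : ∑ k ∈ range (m+1), C (a k) * (Apoly (Apoly (Lpoly k)) - C (2*R+1) * Apoly (Lpoly k)
        - C 2 * (derivative (derivative (Lpoly k)) - derivative (Lpoly k)) - C lam * Lpoly k)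
        = (Apoly (Apoly p) - C (2*R+1) * Apoly p
          - C 2 * (derivative (derivative p) - derivative p)) - C lam * p := by
      rw [e2, e1, e4, e3, ha]
      simp only [Finset.mul_sum, ← Finset.sum_sub_distrib]
      exact Finset.sum_congr rfl fun k _ => by ring
    rw [hrw, heq, sub_self]
  have hT1 : ∑ j ∈ range (m+1), C (a j * ((j:ℝ)^2 + (2*R+1)*(j:ℝ) - lam)
        - ∑ k ∈ Finset.Ico (j+1) (m+1), a k * (2*((k:ℝ) - (j:ℝ)))) * Lpoly j = 0 := by
    have step1 : ∑ k ∈ range (m+1), C (a k) * (Apoly (Apoly (Lpoly k)) - C (2*R+1) * Apoly (Lpoly k)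
        - C 2 * (derivative (derivative (Lpoly k)) - derivative (Lpoly k)) - C lam * Lpoly k)
        = ∑ k ∈ range (m+1), (C (a k * ((k:ℝ)^2 + (2*R+1)*(k:ℝ) - lam)) * Lpoly k
            - ∑ t ∈ range k, C (a k * (2*((k:ℝ) - (t:ℝ)))) * Lpoly t) := by
      refine Finset.sum_congr rfl fun k _ => ?_
      rw [Dterm R lam k, mul_sub, Finset.mul_sum]
      congr 1
      · rw [← mul_assoc, ← C_mul]
      · refine Finset.sum_congr rfl fun t _ => ?_
        rw [← mul_assoc, ← C_mul]
    have expand : ∑ j ∈ range (m+1), C (a j * ((j:ℝ)^2 + (2*R+1)*(j:ℝ) - lam)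
        - ∑ k ∈ Finset.Ico (j+1) (m+1), a k * (2*((k:ℝ) - (j:ℝ)))) * Lpoly j
        = ∑ j ∈ range (m+1), (C (a j * ((j:ℝ)^2 + (2*R+1)*(j:ℝ) - lam)) * Lpoly j
          - ∑ k ∈ Finset.Ico (j+1) (m+1), C (a k * (2*((k:ℝ) - (j:ℝ)))) * Lpoly j) := by
      refine Finset.sum_congr rfl fun j _ => ?_
      rw [C_sub, sub_mul, map_sum C, Finset.sum_mul]
    rw [step1, Finset.sum_sub_distrib,
      swapsum (fun k t => C (a k * (2*((k:ℝ) - (t:ℝ)))) * Lpoly t) (m+1)] at hT0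
    rw [expand, Finset.sum_sub_distrib]
    exact hT0
  have hbb := lag_indep (m+1) _ hT1 n (by omega)
  have hcint : ∀ k : ℕ, k ≤ m →
      (∫ x in Set.Ioi (0 : ℝ), Real.exp (-x) * lag0 k x * y x) = a k := by
    intro k hk
    have hfun : (fun x : ℝ => Real.exp (-x) * lag0 k x * y x)
        = fun x : ℝ => Real.exp (-x) * ((Lpoly k * p).eval x) := by
      funext x; rw [hy x, eval_mul, Lpoly_eval]; ring
    rw [hfun, integral_exp_poly]
    rw [show Lpoly k * p = ∑ i ∈ range (m+1), C (a i) * (Lpoly k * Lpoly i) by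
      rw [ha, Finset.mul_sum]; exact Finset.sum_congr rfl fun i _ => by ring]
    rw [Phi_finset_sum]
    simp only [Phi_C_mul, Phi_LL, mul_ite, mul_one, mul_zero]
    rw [Finset.sum_ite_eq (range (m+1)) k a, if_pos (Finset.mem_range.mpr (by omega))]
  rw [hcint n hn]
  have hsumint : ∑ k ∈ Finset.Icc (n + 1) m,
      ((k : ℝ) - n) * ∫ x in Set.Ioi (0 : ℝ), Real.exp (-x) * lag0 k x * y x
      = ∑ k ∈ Finset.Icc (n + 1) m, ((k : ℝ) - n) * a k := by
    refine Finset.sum_congr rfl fun k hk => ?_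
    rw [hcint k (Finset.mem_Icc.mp hk).2]
  rw [hsumint]
  rw [Finset.Ico_add_one_right_eq_Icc] at hbb
  have hsum2 : ∑ k ∈ Finset.Icc (n+1) m, a k * (2*((k:ℝ) - (n:ℝ)))
      = 2 * ∑ k ∈ Finset.Icc (n+1) m, ((k:ℝ) - n) * a k := by
    rw [Finset.mul_sum]; exact Finset.sum_congr rfl fun k _ => by ring
  rw [hsum2] at hbb
  rw [hlam] at hbb
  linear_combination -hbb
end
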